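/- arXiv:math/0302020 — 5 statements merged into one kernel-verified Lean document; each statement's English description precedes it below -/
import Mathlib

section
/- Under the stated block-operator hypotheses, the eigenspace of B at λ decomposes along the block decomposition: ker(B − λ) = (ker(A0 − λ) ∩ ker V*) ⊕ (ker(A1 − λ) ∩ ker V); that is, (x, y) ∈ H0 × H1 satisfies A0 x + V y = λx and V* x + A1 y = λy if and only if A0 x = λx, V* x = 0, A1 y = λy and V y = 0. -/
open ContinuousLinearMap
open scoped InnerProductSpace Pointwise

section aux
variable {H : Type*} [NormedAddCommGroup H] [InnerProductSpace ℂ H] [CompleteSpace H]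

lemma aux_apply_eq_zero {T : H →L[ℂ] H} (hT : T.IsPositive) {x : H}
    (hx : ⟪T x, x⟫_ℂ = 0) : T x = 0 := by
  obtain ⟨S, hS, -, hS2⟩ :=
    CFC.exists_sqrt_of_isSelfAdjoint_of_quasispectrumRestricts hT.isSelfAdjoint hT.spectrumRestricts
  have hTx : T x = S (S x) := by rw [← hS2]; simp [sq, ContinuousLinearMap.mul_apply]
  have key : ⟪S (S x), x⟫_ℂ = ⟪S x, S x⟫_ℂ := by
    nth_rw 1 [← hS.adjoint_eq]
    exact ContinuousLinearMap.adjoint_inner_left _ _ _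
  have h0 : ⟪S x, S x⟫_ℂ = 0 := by rw [← key, ← hTx, hx]
  have hSx : S x = 0 := inner_self_eq_zero.mp h0
  rw [hTx, hSx, map_zero]

lemma aux_isPositive {A : H →L[ℂ] H} (hA : IsSelfAdjoint A)
    (h : ∀ z ∈ spectrum ℂ A, 0 ≤ z.re) : A.IsPositive := by
  rw [← ContinuousLinearMap.nonneg_iff_isPositive]
  rw [StarOrderedRing.nonneg_iff_spectrum_nonneg (R := ℝ) A hA]
  intro x hx
  have hx' : (x : ℂ) ∈ spectrum ℂ A := spectrum.algebraMap_mem ℂ hx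
  simpa using h _ hx'
end aux

/-- **Kernel decomposition of the block operator at the separating point λ**
(Theorem 2.2 in Kostrykin–Makarov–Motovilov): under the block-operator
hypotheses, `(x, y)` is an eigenvector-component pair of `B` at `λ` if and only
if `A0 x = λ x`, `V* x = 0`, `A1 y = λ y` and `V y = 0`. -/
theorem kernel_decomposition_at_lambda
    {H0 H1 : Type*}
    [NormedAddCommGroup H0] [InnerProductSpace ℂ H0] [CompleteSpace H0]
    [NormedAddCommGroup H1] [InnerProductSpace ℂ H1] [CompleteSpace H1]
    [TopologicalSpace.SeparableSpace H0] [TopologicalSpace.SeparableSpace H1]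
    (A0 : H0 →L[ℂ] H0) (A1 : H1 →L[ℂ] H1) (V : H1 →L[ℂ] H0) (lam : ℝ)
    (hA0 : IsSelfAdjoint A0) (hA1 : IsSelfAdjoint A1)
    (hspec0 : ∀ z ∈ spectrum ℂ A0, z.re ≤ lam)
    (hspec1 : ∀ z ∈ spectrum ℂ A1, lam ≤ z.re) :
    ∀ (x : H0) (y : H1),
      (A0 x + V y = (lam : ℂ) • x ∧ ContinuousLinearMap.adjoint V x + A1 y = (lam : ℂ) • y)
        ↔ (A0 x = (lam : ℂ) • x ∧ ContinuousLinearMap.adjoint V x = 0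
            ∧ A1 y = (lam : ℂ) • y ∧ V y = 0) := by
  set T0 : H0 →L[ℂ] H0 := (lam : ℂ) • 1 - A0 with hT0def
  set T1 : H1 →L[ℂ] H1 := A1 - (lam : ℂ) • 1 with hT1def
  have hone0 : IsSelfAdjoint ((lam : ℂ) • (1 : H0 →L[ℂ] H0)) := by
    rw [IsSelfAdjoint, star_smul, star_one, Complex.star_def, Complex.conj_ofReal]
  have hone1 : IsSelfAdjoint ((lam : ℂ) • (1 : H1 →L[ℂ] H1)) := by
    rw [IsSelfAdjoint, star_smul, star_one, Complex.star_def, Complex.conj_ofReal]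
  have hsa0 : IsSelfAdjoint T0 := hone0.sub hA0
  have hsa1 : IsSelfAdjoint T1 := hA1.sub hone1
  have hP0 : T0.IsPositive := by
    refine aux_isPositive hsa0 fun z hz => ?_
    have : z ∈ ({(lam : ℂ)} : Set ℂ) - spectrum ℂ A0 := by
      rwa [spectrum.singleton_sub_eq, Algebra.algebraMap_eq_smul_one]
    obtain ⟨a, ha, b, hb, rfl⟩ := this
    simp only [Set.mem_singleton_iff] at ha
    subst ha
    simpa using sub_nonneg.mpr (hspec0 b hb)
  have hP1 : T1.IsPositive := by
    refine aux_isPositive hsa1 fun z hz => ?_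
    have : z ∈ spectrum ℂ A1 - ({(lam : ℂ)} : Set ℂ) := by
      rwa [spectrum.sub_singleton_eq, Algebra.algebraMap_eq_smul_one]
    obtain ⟨a, ha, b, hb, rfl⟩ := this
    simp only [Set.mem_singleton_iff] at hb
    subst hb
    simpa using sub_nonneg.mpr (hspec1 a ha)
  intro x y
  constructor
  · rintro ⟨h1, h2⟩
    have e0 : T0 x = V y := by
      simp only [hT0def, ContinuousLinearMap.sub_apply, ContinuousLinearMap.smul_apply,
        ContinuousLinearMap.one_apply]
      rw [← h1]; abel
    have e1 : T1 y = -(ContinuousLinearMap.adjoint V x) := by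
      simp only [hT1def, ContinuousLinearMap.sub_apply, ContinuousLinearMap.smul_apply,
        ContinuousLinearMap.one_apply]
      rw [← h2]; abel
    set a : ℂ := ⟪T0 x, x⟫_ℂ with hadef
    set b : ℂ := ⟪T1 y, y⟫_ℂ with hbdef
    have hconja : (starRingEnd ℂ) a = a := by
      rw [hadef, inner_conj_symm]
      exact ((isSelfAdjoint_iff_isSymmetric.mp hsa0) x x).symm
    have hconjb : (starRingEnd ℂ) b = b := by
      rw [hbdef, inner_conj_symm]
      exact ((isSelfAdjoint_iff_isSymmetric.mp hsa1) y y).symm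
    have hsum : a + b = ⟪V y, x⟫_ℂ - (starRingEnd ℂ) ⟪V y, x⟫_ℂ := by
      rw [hadef, hbdef, e0, e1, inner_neg_left, ContinuousLinearMap.adjoint_inner_left,
        inner_conj_symm]
      ring
    have hima : a.im = 0 := by
      have := congrArg Complex.im hconja
      simp at this; linarith
    have himb : b.im = 0 := by
      have := congrArg Complex.im hconjb
      simp at this; linarith
    have hre : a.re + b.re = 0 := by
      have := congrArg Complex.re hsum
      simpa only [Complex.add_re, Complex.sub_re, Complex.conj_re, sub_self] using this
    have hra : 0 ≤ a.re := (Complex.le_def.mp (hP0.inner_nonneg_left x)).1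
    have hrb : 0 ≤ b.re := (Complex.le_def.mp (hP1.inner_nonneg_left y)).1
    have ha0 : a = 0 := Complex.ext (by simpa using (show a.re = 0 by linarith)) (by simpa using hima)
    have hb0 : b = 0 := Complex.ext (by simpa using (show b.re = 0 by linarith)) (by simpa using himb)
    have hT0x : T0 x = 0 := aux_apply_eq_zero hP0 ha0
    have hT1y : T1 y = 0 := aux_apply_eq_zero hP1 hb0
    have hVy : V y = 0 := by rw [← e0, hT0x]
    have hVx : ContinuousLinearMap.adjoint V x = 0 := by
      have := e1.symm.trans hT1y
      simpa [neg_eq_zero] using this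
    refine ⟨?_, hVx, ?_, hVy⟩
    · rw [← h1, hVy, add_zero]
    · rw [← h2, hVx, zero_add]
  · rintro ⟨h1, h2, h3, h4⟩
    exact ⟨by rw [h1, h4, add_zero], by rw [h2, h3, zero_add]⟩
end

section
/- Under the stated block-operator hypotheses, if in addition ker(A0 − λ) = {0} or ker(A1 − λ) = {0}, then every contractive solution X of the Riccati equation A1 X − X A0 − X V X + V* = 0 is strictly contractive, i.e. ‖X f‖ < ‖f‖ for every f ≠ 0 (equivalently, 1 is not an eigenvalue of X* X). -/
open ContinuousLinearMap
open scoped InnerProductSpace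
set_option synthInstance.maxHeartbeats 1000000
set_option maxHeartbeats 1000000

section Helpers
variable {H : Type*} [NormedAddCommGroup H] [InnerProductSpace ℂ H] [CompleteSpace H]

lemma pos_apply_eq_zero' (T : H →L[ℂ] H) (hT : 0 ≤ T) (f : H)
    (h : RCLike.re ⟪T f, f⟫_ℂ = 0) : T f = 0 := by
  set s := CFC.sqrt T with hs
  have hss : s * s = T := CFC.sqrt_mul_sqrt_self T hT
  have hsa : IsSelfAdjoint s := IsSelfAdjoint.of_nonneg (CFC.sqrt_nonneg T)
  have hsym := (isSelfAdjoint_iff_isSymmetric.mp hsa) (s f) f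
  have h1 : ⟪T f, f⟫_ℂ = ⟪s f, s f⟫_ℂ := by
    rw [← hss, mul_apply_eq_comp]; simpa using hsym
  have h2 : ‖s f‖ ^ 2 = 0 := by
    rw [← inner_self_eq_norm_sq (𝕜 := ℂ)]
    rw [h1] at h; exact h
  have h3 : s f = 0 := by rwa [pow_eq_zero_iff two_ne_zero, norm_eq_zero] at h2
  rw [← hss, mul_apply_eq_comp, h3, map_zero]

lemma selfadj_smul_one' (lam : ℝ) : IsSelfAdjoint ((lam : ℂ) • (1 : H →L[ℂ] H)) := by
  rw [IsSelfAdjoint, star_smul, star_one]; norm_num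

lemma smul_one_eq_algebraMap' (lam : ℝ) :
    (lam : ℂ) • (1 : H →L[ℂ] H) = algebraMap ℝ (H →L[ℂ] H) lam := by
  rw [Algebra.algebraMap_eq_smul_one]
  norm_num [← Complex.coe_smul]

lemma pos_of_spectrum_lower' (A : H →L[ℂ] H) (hA : IsSelfAdjoint A) (lam : ℝ)
    (h : ∀ z ∈ spectrum ℂ A, lam ≤ z.re) : 0 ≤ A - (lam : ℂ) • 1 := by
  have hB : IsSelfAdjoint (A - (lam : ℂ) • (1 : H →L[ℂ] H)) := hA.sub (selfadj_smul_one' lam)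
  rw [StarOrderedRing.nonneg_iff_spectrum_nonneg (R := ℝ) _ hB]
  intro x hx
  rw [smul_one_eq_algebraMap', ← spectrum.sub_singleton_eq] at hx
  obtain ⟨y, hy, z, hz, rfl⟩ := Set.mem_sub.mp hx
  rcases Set.mem_singleton_iff.mp hz
  have := h _ (spectrum.algebraMap_mem ℂ hy)
  simp only [Complex.coe_algebraMap, Complex.ofReal_re] at this
  linarith

lemma pos_of_spectrum_upper' (A : H →L[ℂ] H) (hA : IsSelfAdjoint A) (lam : ℝ)
    (h : ∀ z ∈ spectrum ℂ A, z.re ≤ lam) : 0 ≤ (lam : ℂ) • 1 - A := by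
  have hB : IsSelfAdjoint ((lam : ℂ) • (1 : H →L[ℂ] H) - A) := (selfadj_smul_one' lam).sub hA
  rw [StarOrderedRing.nonneg_iff_spectrum_nonneg (R := ℝ) _ hB]
  intro x hx
  rw [smul_one_eq_algebraMap', ← spectrum.singleton_sub_eq] at hx
  obtain ⟨y, hy, z, hz, rfl⟩ := Set.mem_sub.mp hx
  rcases Set.mem_singleton_iff.mp hy
  have := h _ (spectrum.algebraMap_mem ℂ hz)
  simp only [Complex.coe_algebraMap, Complex.ofReal_re] at this
  linarith

end Helpers

/-- **Strict contractivity of contractive Riccati solutions** (Theorem 2.3 (ii)):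
if moreover `ker(A0-λ) = {0}` or `ker(A1-λ) = {0}`, then every contractive
solution of the Riccati equation is strictly contractive. -/
theorem contractive_riccati_solution_strict
    {H0 H1 : Type*}
    [NormedAddCommGroup H0] [InnerProductSpace ℂ H0] [CompleteSpace H0]
    [NormedAddCommGroup H1] [InnerProductSpace ℂ H1] [CompleteSpace H1]
    [TopologicalSpace.SeparableSpace H0] [TopologicalSpace.SeparableSpace H1]
    (A0 : H0 →L[ℂ] H0) (A1 : H1 →L[ℂ] H1) (V : H1 →L[ℂ] H0) (lam : ℝ)
    (hA0 : IsSelfAdjoint A0) (hA1 : IsSelfAdjoint A1)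
    (hspec0 : ∀ z ∈ spectrum ℂ A0, z.re ≤ lam)
    (hspec1 : ∀ z ∈ spectrum ℂ A1, lam ≤ z.re)
    (hker : (∀ x : H0, A0 x = (lam : ℂ) • x → x = 0) ∨
            (∀ y : H1, A1 y = (lam : ℂ) • y → y = 0)) :
    ∀ X : H0 →L[ℂ] H1, ‖X‖ ≤ 1 →
      A1 ∘L X - X ∘L A0 - X ∘L V ∘L X + ContinuousLinearMap.adjoint V = 0 →
      ∀ f : H0, f ≠ 0 → ‖X f‖ < ‖f‖ := by
  intro X hX hRic f hf
  by_contra hlt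
  push_neg at hlt
  have hle : ‖X f‖ ≤ ‖f‖ := by
    calc ‖X f‖ ≤ ‖X‖ * ‖f‖ := X.le_opNorm f
    _ ≤ 1 * ‖f‖ := mul_le_mul_of_nonneg_right hX (norm_nonneg f)
    _ = ‖f‖ := one_mul _
  have heq : ‖X f‖ = ‖f‖ := le_antisymm hle hlt
  -- X†X f = f
  have hTpos : 0 ≤ (1 : H0 →L[ℂ] H0) - adjoint X ∘L X := by
    rw [nonneg_iff_isPositive]
    constructor
    · have : IsSelfAdjoint (adjoint X ∘L X) := by
        rw [IsSelfAdjoint, star_eq_adjoint, adjoint_comp, adjoint_adjoint]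
      have h1 : IsSelfAdjoint (1 : H0 →L[ℂ] H0) := by
        rw [IsSelfAdjoint, star_one]
      exact isSelfAdjoint_iff_isSymmetric.mp (h1.sub this)
    · intro x
      have : ⟪((1 : H0 →L[ℂ] H0) - adjoint X ∘L X) x, x⟫_ℂ = ⟪x, x⟫_ℂ - ⟪X x, X x⟫_ℂ := by
        rw [sub_apply, inner_sub_left, one_apply_eq_self, comp_apply, adjoint_inner_left]
      rw [reApplyInnerSelf_apply, this, map_sub, inner_self_eq_norm_sq, inner_self_eq_norm_sq,
        sub_nonneg]
      have h1 : ‖X x‖ ≤ ‖x‖ := le_trans (X.le_opNorm x)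
        (by nlinarith [norm_nonneg x])
      exact pow_le_pow_left₀ (norm_nonneg _) h1 2
  have hTf : ((1 : H0 →L[ℂ] H0) - adjoint X ∘L X) f = 0 := by
    apply pos_apply_eq_zero' _ hTpos
    have : ⟪((1 : H0 →L[ℂ] H0) - adjoint X ∘L X) f, f⟫_ℂ = ⟪f, f⟫_ℂ - ⟪X f, X f⟫_ℂ := by
      rw [sub_apply, inner_sub_left, one_apply_eq_self, comp_apply, adjoint_inner_left]
    rw [this, map_sub, inner_self_eq_norm_sq, inner_self_eq_norm_sq, heq, sub_self]
  have hXXf : adjoint X (X f) = f := by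
    have := hTf
    rw [sub_apply, one_apply_eq_self, comp_apply, sub_eq_zero] at this
    exact this.symm
  -- Riccati pairing
  have h0 : (A1 ∘L X - X ∘L A0 - X ∘L V ∘L X + adjoint V) f = 0 := by
    rw [hRic]; rfl
  have h0' : ⟪A1 (X f), X f⟫_ℂ - ⟪A0 f, f⟫_ℂ - ⟪V (X f), f⟫_ℂ + ⟪f, V (X f)⟫_ℂ = 0 := by
    have e1 : ⟪X (A0 f), X f⟫_ℂ = ⟪A0 f, f⟫_ℂ := by
      rw [← hXXf, adjoint_inner_right, hXXf]
    have e2 : ⟪X (V (X f)), X f⟫_ℂ = ⟪V (X f), f⟫_ℂ := by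
      rw [← hXXf, adjoint_inner_right, hXXf]
    have e3 : ⟪(adjoint V) f, X f⟫_ℂ = ⟪f, V (X f)⟫_ℂ := adjoint_inner_left V (X f) f
    calc ⟪A1 (X f), X f⟫_ℂ - ⟪A0 f, f⟫_ℂ - ⟪V (X f), f⟫_ℂ + ⟪f, V (X f)⟫_ℂ
        = ⟪(A1 ∘L X - X ∘L A0 - X ∘L V ∘L X + adjoint V) f, X f⟫_ℂ := by
          simp only [add_apply, sub_apply, comp_apply, inner_add_left, inner_sub_left,
            e1, e2, e3]
      _ = 0 := by rw [h0, inner_zero_left]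
  have hre : RCLike.re ⟪A1 (X f), X f⟫_ℂ = RCLike.re ⟪A0 f, f⟫_ℂ := by
    have hc : ⟪f, V (X f)⟫_ℂ = starRingEnd ℂ ⟪V (X f), f⟫_ℂ := (inner_conj_symm _ _).symm
    have := congrArg RCLike.re h0'
    rw [hc] at this
    simp only [map_add, map_sub, RCLike.conj_re, map_zero] at this
    linarith
  -- positivity bounds
  have hP0 := pos_of_spectrum_upper' A0 hA0 lam hspec0
  have hP1 := pos_of_spectrum_lower' A1 hA1 lam hspec1
  have hq0 : ∀ x : H0, RCLike.re ⟪((lam : ℂ) • 1 - A0) x, x⟫_ℂ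
      = lam * ‖x‖ ^ 2 - RCLike.re ⟪A0 x, x⟫_ℂ := by
    intro x
    rw [sub_apply, inner_sub_left, smul_apply, one_apply_eq_self, inner_smul_left, map_sub]
    simp [inner_self_eq_norm_sq (𝕜 := ℂ)]
    exact Or.inl (by norm_cast)
  have hq1 : ∀ y : H1, RCLike.re ⟪(A1 - (lam : ℂ) • 1) y, y⟫_ℂ
      = RCLike.re ⟪A1 y, y⟫_ℂ - lam * ‖y‖ ^ 2 := by
    intro y
    rw [sub_apply, inner_sub_left, smul_apply, one_apply_eq_self, inner_smul_left, map_sub]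
    simp [inner_self_eq_norm_sq (𝕜 := ℂ)]
    exact Or.inl (by norm_cast)
  have hb0 : RCLike.re ⟪A0 f, f⟫_ℂ ≤ lam * ‖f‖ ^ 2 := by
    have := ((nonneg_iff_isPositive _).mp hP0).re_inner_nonneg_left f
    rw [hq0 f] at this; linarith
  have hb1 : lam * ‖X f‖ ^ 2 ≤ RCLike.re ⟪A1 (X f), X f⟫_ℂ := by
    have := ((nonneg_iff_isPositive _).mp hP1).re_inner_nonneg_left (X f)
    rw [hq1 (X f)] at this; linarith
  rw [heq] at hb1
  -- equalities
  have heq0 : RCLike.re ⟪((lam : ℂ) • 1 - A0) f, f⟫_ℂ = 0 := by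
    rw [hq0 f]; linarith
  have heq1 : RCLike.re ⟪(A1 - (lam : ℂ) • 1) (X f), X f⟫_ℂ = 0 := by
    rw [hq1 (X f), heq]; linarith
  have hz0 : ((lam : ℂ) • 1 - A0) f = 0 := pos_apply_eq_zero' _ hP0 f heq0
  have hz1 : (A1 - (lam : ℂ) • 1) (X f) = 0 := pos_apply_eq_zero' _ hP1 (X f) heq1
  have hA0f : A0 f = (lam : ℂ) • f := by
    have := hz0
    rw [sub_apply, smul_apply, one_apply_eq_self, sub_eq_zero] at this
    exact this.symm
  have hA1Xf : A1 (X f) = (lam : ℂ) • (X f) := by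
    have := hz1
    rw [sub_apply, smul_apply, one_apply_eq_self, sub_eq_zero] at this
    exact this
  rcases hker with hk | hk
  · exact hf (hk f hA0f)
  · have : X f = 0 := hk (X f) hA1Xf
    rw [this, norm_zero] at heq
    exact hf (norm_eq_zero.mp heq.symm)
end

section
/- Under the stated block-operator hypotheses, assume in addition that d := dist(spec(A0), spec(A1)) > 0. Let X be a contractive solution of the Riccati equation, P the orthogonal projection of H onto H0 × {0}, and Q the orthogonal projection of H onto the graph G(X). Then ‖P − Q‖ ≤ sin((1/2)·arctan(2‖V‖/d)) < √2/2. -/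
open ContinuousLinearMap

/-- The graph `{(x, X x) : x ∈ H0}` of a bounded operator `X : H0 → H1`, as a
subspace of the Hilbert direct sum `H = H0 ⊕ H1` (modelled as `WithLp 2 (H0 × H1)`). -/
noncomputable def graphSubspace {H0 H1 : Type*}
    [NormedAddCommGroup H0] [InnerProductSpace ℂ H0] [CompleteSpace H0]
    [NormedAddCommGroup H1] [InnerProductSpace ℂ H1] [CompleteSpace H1]
    (X : H0 →L[ℂ] H1) : Submodule ℂ (WithLp 2 (H0 × H1)) :=
  LinearMap.range
    (((WithLp.prodContinuousLinearEquiv 2 ℂ H0 H1).symm.toContinuousLinearMap ∘L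
      (ContinuousLinearMap.id ℂ H0).prod X : H0 →ₗ[ℂ] WithLp 2 (H0 × H1)))

namespace DavisKahanAux

local notation "⟪" x ", " y "⟫" => @inner ℂ _ _ x y

section InnerLemmas

variable {H : Type*} [NormedAddCommGroup H] [InnerProductSpace ℂ H]

lemma re_inner_self' (y : H) : (⟪y, y⟫).re = ‖y‖ ^ 2 := by
  rw [@inner_self_eq_norm_sq_to_K ℂ]
  norm_cast

lemma re_inner_comm (u v : H) : (⟪u, v⟫).re = (⟪v, u⟫).re := by
  rw [← inner_conj_symm u v]
  exact Complex.conj_re _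

lemma norm_sub_sq' (u v : H) :
    ‖u - v‖ ^ 2 = ‖u‖ ^ 2 - 2 * (⟪u, v⟫).re + ‖v‖ ^ 2 := by
  rw [← re_inner_self' (u - v)]
  simp only [inner_sub_left, inner_sub_right, Complex.sub_re]
  rw [re_inner_self', re_inner_self', re_inner_comm v u]
  ring

lemma norm_add_sq' (u v : H) :
    ‖u + v‖ ^ 2 = ‖u‖ ^ 2 + 2 * (⟪u, v⟫).re + ‖v‖ ^ 2 := by
  have h := norm_sub_sq' u (-v)
  rw [sub_neg_eq_add, inner_neg_right, Complex.neg_re] at h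
  rw [h, norm_neg]
  ring

lemma re_inner_le (u v : H) : (⟪u, v⟫).re ≤ ‖u‖ * ‖v‖ := by
  refine le_trans (Complex.re_le_norm _) ?_
  exact norm_inner_le_norm u v

lemma re_inner_le_norm' (A : H →L[ℂ] H) (y : H) : (⟪A y, y⟫).re ≤ ‖A‖ * ‖y‖ ^ 2 := by
  calc (⟪A y, y⟫).re ≤ ‖A y‖ * ‖y‖ := re_inner_le _ _
    _ ≤ ‖A‖ * ‖y‖ * ‖y‖ :=
        mul_le_mul_of_nonneg_right (A.le_opNorm y) (norm_nonneg _)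
    _ = ‖A‖ * ‖y‖ ^ 2 := by ring

lemma inner_scale (B : H →L[ℂ] H) (r : ℝ) (y : H) :
    (⟪B ((r : ℂ) • y), (r : ℂ) • y⟫).re = r ^ 2 * (⟪B y, y⟫).re := by
  rw [map_smul, inner_smul_left, inner_smul_right, Complex.conj_ofReal]
  rw [← mul_assoc, ← Complex.ofReal_mul, Complex.re_ofReal_mul]
  ring

end InnerLemmas

section Spectral

variable {H : Type*} [NormedAddCommGroup H] [InnerProductSpace ℂ H] [CompleteSpace H]

set_option maxHeartbeats 1000000 in
lemma numRange_le_of_spectrum_re_le (A : H →L[ℂ] H) (hA : IsSelfAdjoint A)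
    (c : ℝ) (hspec : ∀ z ∈ spectrum ℂ A, z.re ≤ c) (x : H) :
    (⟪A x, x⟫).re ≤ c * ‖x‖ ^ 2 := by
  by_contra hcon
  push_neg at hcon
  have hx0 : x ≠ 0 := by
    rintro rfl
    simp at hcon
  have hnx : (0:ℝ) < ‖x‖ := norm_pos_iff.mpr hx0
  set x₀ : H := ((‖x‖⁻¹ : ℝ) : ℂ) • x with hx₀def
  have hx₀norm : ‖x₀‖ = 1 := by
    rw [hx₀def, norm_smul, Complex.norm_real, Real.norm_eq_abs,
      abs_of_nonneg (inv_nonneg.mpr hnx.le), inv_mul_cancel₀ hnx.ne']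
  have hx₀val : c < (⟪A x₀, x₀⟫).re := by
    rw [hx₀def, inner_scale]
    have h1 : c * ‖x‖ ^ 2 * (‖x‖⁻¹) ^ 2 < (⟪A x, x⟫).re * (‖x‖⁻¹)^2 := by
      apply mul_lt_mul_of_pos_right hcon
      positivity
    calc c = c * ‖x‖ ^ 2 * (‖x‖⁻¹) ^ 2 := by
            field_simp
      _ < (⟪A x, x⟫).re * (‖x‖⁻¹) ^ 2 := h1
      _ = (‖x‖⁻¹) ^ 2 * (⟪A x, x⟫).re := by ring
  set S : Set ℝ := (fun y : H => (⟪A y, y⟫).re) '' {y | ‖y‖ = 1} with hSdef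
  have hx₀S : (⟪A x₀, x₀⟫).re ∈ S := ⟨x₀, hx₀norm, rfl⟩
  have hSne : S.Nonempty := ⟨_, hx₀S⟩
  have hbdd : BddAbove S := by
    refine ⟨‖A‖, ?_⟩
    rintro r ⟨y, hy, rfl⟩
    have := re_inner_le_norm' A y
    rw [Set.mem_setOf_eq] at hy
    rw [hy] at this; simpa using this
  set m : ℝ := sSup S with hmdef
  have hcm : c < m := lt_of_lt_of_le hx₀val (le_csSup hbdd hx₀S)
  have hform : ∀ y : H, (⟪A y, y⟫).re ≤ m * ‖y‖ ^ 2 := by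
    intro y
    rcases eq_or_ne y 0 with rfl | hy0
    · simp
    · have hny : (0:ℝ) < ‖y‖ := norm_pos_iff.mpr hy0
      set y₀ : H := ((‖y‖⁻¹ : ℝ) : ℂ) • y with hy₀def
      have hy₀norm : ‖y₀‖ = 1 := by
        rw [hy₀def, norm_smul, Complex.norm_real, Real.norm_eq_abs,
          abs_of_nonneg (inv_nonneg.mpr hny.le), inv_mul_cancel₀ hny.ne']
      have hmem : (⟪A y₀, y₀⟫).re ≤ m := le_csSup hbdd ⟨y₀, hy₀norm, rfl⟩
      have hval : (⟪A y₀, y₀⟫).re = (‖y‖⁻¹) ^ 2 * (⟪A y, y⟫).re := by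
        rw [hy₀def, inner_scale]
      have hyy : ‖y‖ ^ 2 * (‖y‖⁻¹) ^ 2 = 1 := by
        rw [← mul_pow, mul_inv_cancel₀ hny.ne', one_pow]
      have h5 : ‖y‖ ^ 2 * ((‖y‖⁻¹) ^ 2 * (⟪A y, y⟫).re) ≤ ‖y‖ ^ 2 * m :=
        mul_le_mul_of_nonneg_left (hval ▸ hmem) (sq_nonneg _)
      rw [← mul_assoc, hyy, one_mul] at h5
      linarith
  set T : H →L[ℂ] H := ((m : ℂ)) • (1 : H →L[ℂ] H) - A with hTdef
  have hmsa : IsSelfAdjoint ((m : ℂ)) := by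
    simpa [isSelfAdjoint_iff] using Complex.conj_ofReal m
  have hT : IsSelfAdjoint T := (hmsa.smul (IsSelfAdjoint.one _)).sub hA
  have hTadj : ContinuousLinearMap.adjoint T = T := hT
  have hTsym : ∀ y z : H, ⟪T y, z⟫ = ⟪y, T z⟫ := by
    intro y z
    have := ContinuousLinearMap.adjoint_inner_left T z y
    rw [hTadj] at this
    exact this
  have hTval : ∀ y : H, (⟪T y, y⟫).re = m * ‖y‖ ^ 2 - (⟪A y, y⟫).re := by
    intro y
    rw [hTdef]
    simp only [ContinuousLinearMap.sub_apply, ContinuousLinearMap.smul_apply,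
      ContinuousLinearMap.one_apply, inner_sub_left, inner_smul_left,
      Complex.conj_ofReal]
    rw [Complex.sub_re, Complex.re_ofReal_mul, re_inner_self']
  have hTpos : ∀ y : H, 0 ≤ (⟪T y, y⟫).re := by
    intro y
    rw [hTval]
    have := hform y
    linarith
  have hCS : ∀ y : H, ‖T y‖ ^ 2 * ‖T y‖ ^ 2 ≤ (⟪T y, y⟫).re * (‖T‖ * ‖T y‖ ^ 2) := by
    intro y
    set z : H := T y with hzdef
    have hquad : ∀ s : ℝ, 0 ≤ (⟪T z, z⟫).re * (s * s) + (2 * (⟪T y, z⟫).re) * s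
        + (⟪T y, y⟫).re := by
      intro s
      have h0 := hTpos (y + (s : ℂ) • z)
      have hexp : (⟪T (y + (s : ℂ) • z), y + (s : ℂ) • z⟫).re
          = (⟪T y, y⟫).re + s * (⟪T y, z⟫).re + s * (⟪T z, y⟫).re
            + s ^ 2 * (⟪T z, z⟫).re := by
        simp only [map_add, map_smul, inner_add_left, inner_add_right,
          inner_smul_left, inner_smul_right, Complex.conj_ofReal, Complex.add_re,
          Complex.mul_re, Complex.ofReal_re, Complex.ofReal_im, zero_mul, mul_zero,
          sub_zero]
        ring
      have hsymzy : (⟪T z, y⟫).re = (⟪T y, z⟫).re := by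
        rw [hTsym z y, ← inner_conj_symm]
        try simp
      rw [hexp, hsymzy] at h0
      nlinarith [h0]
    have hdisc := discrim_le_zero hquad
    rw [discrim] at hdisc
    have h1 : (⟪T y, z⟫).re = ‖T y‖ ^ 2 := by
      rw [hzdef, re_inner_self']
    have h2 : (⟪T z, z⟫).re ≤ ‖T‖ * ‖z‖ ^ 2 := re_inner_le_norm' T z
    have h3 : (0:ℝ) ≤ (⟪T y, y⟫).re := hTpos y
    have h4 : (0:ℝ) ≤ (⟪T z, z⟫).re := hTpos z
    nlinarith [sq_nonneg ‖T y‖, h2, h3, h4]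
  have hmem : (m : ℂ) ∈ spectrum ℂ A := by
    rw [spectrum.mem_iff]
    intro hunit
    rw [Algebra.algebraMap_eq_smul_one] at hunit
    obtain ⟨u, hu⟩ := hunit
    set B : H →L[ℂ] H := ↑u⁻¹ with hBdef
    have hBT : ∀ w : H, B (T w) = w := by
      intro w
      have huT : (B * T) = 1 := by rw [hBdef, hTdef, ← hu]; exact u.inv_mul
      calc B (T w) = (B * T) w := rfl
        _ = w := by rw [huT]; rfl
    set G : ℝ := ‖B‖ ^ 2 * ‖T‖ with hGdef
    have hG : (0:ℝ) ≤ G := by rw [hGdef]; positivity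
    set ε : ℝ := 1 / (2 * (G + 1)) with hεdef
    have hTn : (0:ℝ) ≤ ‖T‖ := norm_nonneg _
    have hBn : (0:ℝ) ≤ ‖B‖ := norm_nonneg _
    have hεpos : 0 < ε := by rw [hεdef]; positivity
    obtain ⟨r, hrS, hrgt⟩ := exists_lt_of_lt_csSup hSne (by linarith : m - ε < m)
    obtain ⟨y, hy1, rfl⟩ := hrS
    rw [Set.mem_setOf_eq] at hy1
    have hTy_small : (⟪T y, y⟫).re < ε := by
      rw [hTval, hy1]
      simp only [one_pow, mul_one]
      simp only at hrgt
      linarith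
    have hTy2 : ‖T y‖ ^ 2 ≤ ε * ‖T‖ := by
      rcases eq_or_lt_of_le (norm_nonneg (T y)) with h0 | h0
      · rw [← h0]
        simpa using mul_nonneg hεpos.le hTn
      · have hN2 : (0:ℝ) < ‖T y‖ ^ 2 := by positivity
        have h5 : (⟪T y, y⟫).re * (‖T‖ * ‖T y‖ ^ 2) ≤ ε * (‖T‖ * ‖T y‖ ^ 2) :=
          mul_le_mul_of_nonneg_right hTy_small.le (by positivity)
        have h6 := (hCS y).trans h5
        nlinarith [h6, hN2]
    have hone : (1:ℝ) ≤ ‖B‖ * ‖T y‖ := by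
      have := B.le_opNorm (T y)
      rw [hBT y, hy1] at this
      exact this
    have h7 : (1:ℝ) ≤ ‖B‖ ^ 2 * (ε * ‖T‖) := by
      nlinarith [hone, hTy2, hBn]
    have h8 : (1:ℝ) ≤ G / (2 * (G + 1)) := by
      calc (1:ℝ) ≤ ‖B‖ ^ 2 * (ε * ‖T‖) := h7
        _ = G * ε := by rw [hGdef]; ring
        _ = G / (2 * (G + 1)) := by rw [hεdef]; ring
    have h9 : G / (2 * (G + 1)) < 1 := by
      rw [div_lt_one (by positivity)]
      linarith
    linarith
  have := hspec _ hmem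
  simp only [Complex.ofReal_re] at this
  linarith

lemma numRange_ge_of_spectrum_re_ge (A : H →L[ℂ] H) (hA : IsSelfAdjoint A)
    (c : ℝ) (hspec : ∀ z ∈ spectrum ℂ A, c ≤ z.re) (x : H) :
    c * ‖x‖ ^ 2 ≤ (⟪A x, x⟫).re := by
  have h := numRange_le_of_spectrum_re_le (-A) hA.neg (-c) ?_ x
  · have heq : (⟪(-A) x, x⟫).re = -(⟪A x, x⟫).re := by
      simp [inner_neg_left]
    rw [heq] at h
    linarith
  · intro z hz
    rw [← spectrum.neg_eq] at hz
    rw [Set.mem_neg] at hz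
    have := hspec _ hz
    simp only [Complex.neg_re] at this
    linarith

end Spectral

set_option maxHeartbeats 2000000 in
lemma riccati_key_estimate {H0 H1 : Type*}
    [NormedAddCommGroup H0] [InnerProductSpace ℂ H0] [CompleteSpace H0]
    [NormedAddCommGroup H1] [InnerProductSpace ℂ H1] [CompleteSpace H1]
    (A0 : H0 →L[ℂ] H0) (A1 : H1 →L[ℂ] H1) (V : H1 →L[ℂ] H0)
    (X : H0 →L[ℂ] H1) (hX : ‖X‖ ≤ 1)
    (hRic : ∀ x : H0, A1 (X x) = X (A0 x) + X (V (X x)) - (ContinuousLinearMap.adjoint V) x)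
    (b dd : ℝ) (hdd : 0 < dd)
    (h0 : ∀ x : H0, (⟪A0 x, x⟫).re ≤ (b - dd) * ‖x‖ ^ 2)
    (h1 : ∀ y : H1, b * ‖y‖ ^ 2 ≤ (⟪A1 y, y⟫).re) :
    dd * ‖X‖ ^ 2 ≤ ‖V‖ * ‖X‖ * (1 - ‖X‖ ^ 2) := by
  set t : ℝ := ‖X‖ with htdef
  have ht0 : 0 ≤ t := norm_nonneg _
  rcases eq_or_lt_of_le ht0 with ht | htpos
  · rw [← ht]; simp
  set C : ℝ := ‖A0‖ + ‖V‖ + |b| + 1 with hCdef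
  have hC1 : 1 ≤ C := by
    have := norm_nonneg A0; have := norm_nonneg V; have := abs_nonneg b
    rw [hCdef]; linarith
  have hC0 : 0 < C := by linarith
  refine le_of_forall_pos_le_add (fun η hη => ?_)
  set ε : ℝ := min (t ^ 2 / 2) (min (η / (2 * C)) ((η / (2 * C)) ^ 2)) with hεdef
  have hη2C : 0 < η / (2 * C) := by positivity
  have hεpos : 0 < ε := by
    rw [hεdef]
    exact lt_min (by positivity) (lt_min hη2C (by positivity))
  have hεt2 : ε ≤ t ^ 2 / 2 := min_le_left _ _
  have hεη : ε ≤ η / (2 * C) := (min_le_right _ _).trans (min_le_left _ _)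
  have hεη2 : ε ≤ (η / (2 * C)) ^ 2 := (min_le_right _ _).trans (min_le_right _ _)
  have hsqrtε : Real.sqrt ε ≤ η / (2 * C) := by
    calc Real.sqrt ε ≤ Real.sqrt ((η / (2 * C)) ^ 2) := Real.sqrt_le_sqrt hεη2
      _ = η / (2 * C) := Real.sqrt_sq hη2C.le
  have hr_lt : Real.sqrt (t ^ 2 - ε) < ‖X‖ := by
    calc Real.sqrt (t ^ 2 - ε) < Real.sqrt (t ^ 2) :=
          Real.sqrt_lt_sqrt (by nlinarith) (by linarith)
      _ = t := Real.sqrt_sq ht0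
  obtain ⟨x', hx'n, hx'v⟩ := X.exists_lt_apply_of_lt_opNorm hr_lt
  have hXx'pos : 0 < ‖X x'‖ := lt_of_le_of_lt (Real.sqrt_nonneg _) hx'v
  have hx'0 : x' ≠ 0 := by
    intro h; rw [h] at hXx'pos; simp at hXx'pos
  have hnx' : 0 < ‖x'‖ := norm_pos_iff.mpr hx'0
  set x : H0 := ((‖x'‖⁻¹ : ℝ) : ℂ) • x' with hxdef
  have hxnorm : ‖x‖ = 1 := by
    rw [hxdef, norm_smul, Complex.norm_real, Real.norm_eq_abs,
      abs_of_nonneg (inv_nonneg.mpr hnx'.le), inv_mul_cancel₀ hnx'.ne']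
  have hXx_gt : Real.sqrt (t ^ 2 - ε) < ‖X x‖ := by
    rw [hxdef, map_smul, norm_smul, Complex.norm_real, Real.norm_eq_abs,
      abs_of_nonneg (inv_nonneg.mpr hnx'.le)]
    have hinv1 : 1 ≤ ‖x'‖⁻¹ := one_le_inv₀ hnx' |>.mpr hx'n.le
    calc Real.sqrt (t ^ 2 - ε) < ‖X x'‖ := hx'v
      _ = 1 * ‖X x'‖ := (one_mul _).symm
      _ ≤ ‖x'‖⁻¹ * ‖X x'‖ := mul_le_mul_of_nonneg_right hinv1 (norm_nonneg _)
  set y : H1 := X x with hydef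
  set k : H0 := (ContinuousLinearMap.adjoint X) y with hkdef
  set w : H0 := ((t ^ 2 : ℝ) : ℂ) • x with hwdef
  have hy_le : ‖y‖ ≤ t := by
    have := X.le_opNorm x
    rw [hxnorm, mul_one] at this
    exact this
  have hy2_le : ‖y‖ ^ 2 ≤ t ^ 2 := by nlinarith [norm_nonneg y]
  have hy2_gt : t ^ 2 - ε < ‖y‖ ^ 2 := by
    have h := pow_lt_pow_left₀ hXx_gt (Real.sqrt_nonneg _) (by norm_num : 2 ≠ 0)
    rwa [Real.sq_sqrt (by nlinarith)] at h
  have hadjn : ‖(ContinuousLinearMap.adjoint X : H1 →L[ℂ] H0)‖ = t := by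
    rw [htdef]
    exact LinearIsometryEquiv.norm_map _ X
  have hk_le : ‖k‖ ≤ t * ‖y‖ := by
    have := (ContinuousLinearMap.adjoint X).le_opNorm y
    rwa [hadjn] at this
  have hkx : ⟪k, x⟫ = ⟪y, y⟫ := by
    rw [hkdef, ContinuousLinearMap.adjoint_inner_left X x y, hydef]
  have hwnorm : ‖w‖ = t ^ 2 := by
    rw [hwdef, norm_smul, Complex.norm_real, Real.norm_eq_abs,
      abs_of_nonneg (by positivity : (0:ℝ) ≤ t ^ 2), hxnorm, mul_one]
  have hkw : (⟪k, w⟫).re = t ^ 2 * ‖y‖ ^ 2 := by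
    rw [hwdef, inner_smul_right, Complex.re_ofReal_mul, hkx, re_inner_self']
  set δ : ℝ := ‖k - w‖ with hδdef
  have hδ0 : 0 ≤ δ := norm_nonneg _
  have hδ2 : δ ^ 2 ≤ t ^ 2 * ε := by
    have hexp : δ ^ 2 = ‖k‖ ^ 2 - 2 * (t ^ 2 * ‖y‖ ^ 2) + (t ^ 2) ^ 2 := by
      rw [hδdef, norm_sub_sq', hkw, hwnorm]
    have hk2 : ‖k‖ ^ 2 ≤ t ^ 2 * ‖y‖ ^ 2 := by nlinarith [norm_nonneg k, norm_nonneg y]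
    nlinarith [hy2_gt, hy2_le]
  have hδε : δ ≤ Real.sqrt ε := by
    have h1' : δ = Real.sqrt (δ ^ 2) := (Real.sqrt_sq hδ0).symm
    rw [h1']
    apply Real.sqrt_le_sqrt
    have ht2 : t ^ 2 ≤ 1 := by nlinarith
    nlinarith [hδ2, mul_le_mul_of_nonneg_right ht2 hεpos.le]
  have hmain : (⟪A1 y, y⟫).re = (⟪A0 x, k⟫).re + (⟪V y, k - x⟫).re := by
    have h := hRic x
    have h2 : ⟪A1 y, y⟫ = ⟪X (A0 x), y⟫ + ⟪X (V y), y⟫ - ⟪(ContinuousLinearMap.adjoint V) x, y⟫ := by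
      rw [hydef, h]
      rw [inner_sub_left, inner_add_left]
    have e1 : ⟪X (A0 x), y⟫ = ⟪A0 x, k⟫ := by
      rw [hkdef, ContinuousLinearMap.adjoint_inner_right X (A0 x) y]
    have e2 : ⟪X (V y), y⟫ = ⟪V y, k⟫ := by
      rw [hkdef, ContinuousLinearMap.adjoint_inner_right X (V y) y]
    have e3 : ⟪(ContinuousLinearMap.adjoint V) x, y⟫ = ⟪x, V y⟫ :=
      ContinuousLinearMap.adjoint_inner_left V y x
    rw [h2, e1, e2, e3]
    rw [Complex.sub_re, Complex.add_re, inner_sub_right, Complex.sub_re,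
      re_inner_comm x (V y)]
    ring
  have hb1 : b * ‖y‖ ^ 2 ≤ (⟪A1 y, y⟫).re := h1 y
  have hb2 : (⟪A0 x, k⟫).re ≤ t ^ 2 * (b - dd) + ‖A0‖ * δ := by
    have hsplit : (⟪A0 x, k⟫).re = (⟪A0 x, w⟫).re + (⟪A0 x, k - w⟫).re := by
      rw [← Complex.add_re, ← inner_add_right]
      congr 2
      abel
    have hw : (⟪A0 x, w⟫).re = t ^ 2 * (⟪A0 x, x⟫).re := by
      rw [hwdef, inner_smul_right, Complex.re_ofReal_mul]
    have hxx : (⟪A0 x, x⟫).re ≤ b - dd := by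
      have := h0 x
      rw [hxnorm] at this
      simpa using this
    have hw_le : (⟪A0 x, w⟫).re ≤ t ^ 2 * (b - dd) := by
      rw [hw]
      exact mul_le_mul_of_nonneg_left hxx (by positivity)
    have hrem : (⟪A0 x, k - w⟫).re ≤ ‖A0‖ * δ := by
      calc (⟪A0 x, k - w⟫).re ≤ ‖A0 x‖ * ‖k - w‖ := re_inner_le _ _
        _ ≤ ‖A0‖ * δ := by
            rw [← hδdef]
            apply mul_le_mul_of_nonneg_right _ hδ0
            have := A0.le_opNorm x
            rwa [hxnorm, mul_one] at this
    linarith [hsplit, hw_le, hrem]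
  have hb3 : (⟪V y, k - x⟫).re ≤ ‖V‖ * t * (1 - t ^ 2) + ‖V‖ * t * δ := by
    have hkx_norm : ‖k - x‖ ≤ δ + (1 - t ^ 2) := by
      have htri : ‖k - x‖ ≤ ‖k - w‖ + ‖w - x‖ := by
        have : k - x = (k - w) + (w - x) := by abel
        rw [this]
        exact norm_add_le _ _
      have hwx : ‖w - x‖ = 1 - t ^ 2 := by
        have : w - x = ((t ^ 2 - 1 : ℝ) : ℂ) • x := by
          rw [hwdef]
          push_cast
          rw [sub_smul, one_smul]
        rw [this, norm_smul, Complex.norm_real, Real.norm_eq_abs, hxnorm, mul_one,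
          abs_of_nonpos (by nlinarith)]
        ring
      rw [← hδdef, hwx] at htri
      exact htri
    have hVy : ‖V y‖ ≤ ‖V‖ * t := by
      calc ‖V y‖ ≤ ‖V‖ * ‖y‖ := V.le_opNorm y
        _ ≤ ‖V‖ * t := mul_le_mul_of_nonneg_left hy_le (norm_nonneg V)
    calc (⟪V y, k - x⟫).re ≤ ‖V y‖ * ‖k - x‖ := re_inner_le _ _
      _ ≤ (‖V‖ * t) * (δ + (1 - t ^ 2)) := by
          apply mul_le_mul hVy hkx_norm (norm_nonneg _) (by positivity)
      _ = ‖V‖ * t * (1 - t ^ 2) + ‖V‖ * t * δ := by ring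
  have hb4 : b * t ^ 2 - |b| * ε ≤ b * ‖y‖ ^ 2 := by
    have habs : |‖y‖ ^ 2 - t ^ 2| ≤ ε := by
      rw [abs_le]
      constructor <;> linarith
    have hmul : |b * (‖y‖ ^ 2 - t ^ 2)| ≤ |b| * ε := by
      rw [abs_mul]
      exact mul_le_mul_of_nonneg_left habs (abs_nonneg b)
    have hlow := neg_abs_le (b * (‖y‖ ^ 2 - t ^ 2))
    linarith only [hmul, hlow]
  have hcomb : dd * t ^ 2 ≤ ‖V‖ * t * (1 - t ^ 2) + (‖A0‖ * δ + ‖V‖ * t * δ) + |b| * ε := by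
    linarith only [hb1, hb2, hb3, hb4, hmain]
  have herr : (‖A0‖ * δ + ‖V‖ * t * δ) + |b| * ε ≤ η := by
    have hexp : ‖A0‖ * δ + ‖V‖ * t * δ = (‖A0‖ + ‖V‖ * t) * δ := by ring
    have hco : ‖A0‖ + ‖V‖ * t ≤ C := by
      have : ‖V‖ * t ≤ ‖V‖ := mul_le_of_le_one_right (norm_nonneg V) hX
      rw [hCdef]
      have := abs_nonneg b
      linarith
    have h5 : (‖A0‖ + ‖V‖ * t) * δ ≤ C * (η / (2 * C)) := by
      apply mul_le_mul hco (hδε.trans hsqrtε) hδ0 hC0.le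
    have h6 : |b| * ε ≤ C * (η / (2 * C)) := by
      apply mul_le_mul _ hεη hεpos.le hC0.le
      rw [hCdef]
      have := norm_nonneg A0; have := norm_nonneg V
      linarith
    have h7 : C * (η / (2 * C)) = η / 2 := by
      field_simp
    rw [h7] at h5 h6
    linarith only [hexp, h5, h6]
  linarith only [hcomb, herr]

section Graph

variable {H0 H1 : Type*}
    [NormedAddCommGroup H0] [InnerProductSpace ℂ H0] [CompleteSpace H0]
    [NormedAddCommGroup H1] [InnerProductSpace ℂ H1] [CompleteSpace H1]

lemma mem_graphSubspace_iff (X : H0 →L[ℂ] H1) (v : WithLp 2 (H0 × H1)) :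
    v ∈ graphSubspace X ↔ v.snd = X v.fst := by
  rw [graphSubspace, LinearMap.mem_range]
  constructor
  · rintro ⟨x, rfl⟩
    rfl
  · intro hv
    exact ⟨v.fst, by apply WithLp.ofLp_injective; apply Prod.ext <;> simp [hv.symm]⟩

-- any selfadjoint idempotent with range equal to `H0 × {0}` acts as `(a, b) ↦ (a, 0)`
lemma proj_formula (P : WithLp 2 (H0 × H1) →L[ℂ] WithLp 2 (H0 × H1))
    (hP : IsSelfAdjoint P) (hPidem : IsIdempotentElem P)
    (hPran : LinearMap.range (P : WithLp 2 (H0 × H1) →ₗ[ℂ] WithLp 2 (H0 × H1)) = graphSubspace (0 : H0 →L[ℂ] H1))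
    (v : WithLp 2 (H0 × H1)) :
    (P v).fst = v.fst ∧ (P v).snd = 0 := by
  have hPadj : ContinuousLinearMap.adjoint P = P := hP
  set w₀ : WithLp 2 (H0 × H1) := (WithLp.equiv 2 (H0 × H1)).symm (v.fst, 0) with hw₀def
  have hw₀fst : w₀.fst = v.fst := rfl
  have hw₀snd : w₀.snd = 0 := rfl
  have hw₀mem : w₀ ∈ graphSubspace (0 : H0 →L[ℂ] H1) := by
    rw [mem_graphSubspace_iff]
    simp [hw₀fst, hw₀snd]
  have hPw₀ : P w₀ = w₀ := by
    rw [← hPran] at hw₀mem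
    obtain ⟨z, hz⟩ := hw₀mem
    rw [← hz, ContinuousLinearMap.coe_coe, ← ContinuousLinearMap.mul_apply, hPidem]
  have hPrest : P (v - w₀) = 0 := by
    have horto : ∀ u : WithLp 2 (H0 × H1), ⟪P (v - w₀), u⟫ = 0 := by
      intro u
      have h1 : ⟪P (v - w₀), u⟫ = ⟪v - w₀, P u⟫ := by
        conv_lhs => rw [← hPadj]
        exact ContinuousLinearMap.adjoint_inner_left P u (v - w₀)
      have hPu : (P u) ∈ graphSubspace (0 : H0 →L[ℂ] H1) := by
        rw [← hPran]
        exact ⟨u, rfl⟩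
      rw [mem_graphSubspace_iff] at hPu
      simp only [ContinuousLinearMap.zero_apply] at hPu
      have hsub_fst : (v - w₀).fst = 0 := by
        rw [WithLp.sub_fst, hw₀fst, sub_self]
      rw [h1, WithLp.prod_inner_apply]
      simp [hsub_fst, hPu, hw₀fst]
    have := horto (P (v - w₀))
    exact inner_self_eq_zero.mp this
  constructor
  · have : P v = P w₀ + P (v - w₀) := by rw [← map_add]; congr 1; abel
    rw [this, hPw₀, hPrest, add_zero, hw₀fst]
  · have : P v = P w₀ + P (v - w₀) := by rw [← map_add]; congr 1; abel
    rw [this, hPw₀, hPrest, add_zero, hw₀snd]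

end Graph


set_option maxHeartbeats 1000000 in
lemma proj_diff_le {H0 H1 : Type*}
    [NormedAddCommGroup H0] [InnerProductSpace ℂ H0] [CompleteSpace H0]
    [NormedAddCommGroup H1] [InnerProductSpace ℂ H1] [CompleteSpace H1]
    (X : H0 →L[ℂ] H1)
    (P Q : WithLp 2 (H0 × H1) →L[ℂ] WithLp 2 (H0 × H1))
    (hP : IsSelfAdjoint P) (hPidem : IsIdempotentElem P)
    (hPran : LinearMap.range (P : WithLp 2 (H0 × H1) →ₗ[ℂ] WithLp 2 (H0 × H1)) = graphSubspace (0 : H0 →L[ℂ] H1))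
    (hQ : IsSelfAdjoint Q) (hQidem : IsIdempotentElem Q)
    (hQran : LinearMap.range (Q : WithLp 2 (H0 × H1) →ₗ[ℂ] WithLp 2 (H0 × H1)) = graphSubspace X) :
    ‖P - Q‖ ≤ Real.sqrt (‖X‖ ^ 2 / (1 + ‖X‖ ^ 2)) := by
  set t : ℝ := ‖X‖ with htdef
  have ht0 : (0:ℝ) ≤ t := norm_nonneg _
  have htpos : (0:ℝ) < 1 + t ^ 2 := by positivity
  set c : ℝ := Real.sqrt (t ^ 2 / (1 + t ^ 2)) with hcdef
  have hc0 : 0 ≤ c := Real.sqrt_nonneg _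
  have hc2 : c ^ 2 = t ^ 2 / (1 + t ^ 2) := by
    rw [hcdef, Real.sq_sqrt (by positivity)]
  have hQadj : ContinuousLinearMap.adjoint Q = Q := hQ
  have hadjn : ‖(ContinuousLinearMap.adjoint X : H1 →L[ℂ] H0)‖ = t := by
    rw [htdef]
    exact LinearIsometryEquiv.norm_map _ X
  apply ContinuousLinearMap.opNorm_le_bound _ hc0
  intro h
  set u : WithLp 2 (H0 × H1) := h - Q h with hudef
  set v : WithLp 2 (H0 × H1) := Q h with hvdef
  have hvmem : v ∈ graphSubspace X := by
    have : v ∈ LinearMap.range (Q : WithLp 2 (H0 × H1) →ₗ[ℂ] WithLp 2 (H0 × H1)) := ⟨h, rfl⟩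
    rwa [hQran] at this
  have hvsnd : v.snd = X v.fst := (mem_graphSubspace_iff X v).mp hvmem
  have hu_perp : ∀ s ∈ graphSubspace X, ⟪u, s⟫ = 0 := by
    intro s hs
    rw [← hQran] at hs
    obtain ⟨g, hg⟩ := hs
    rw [← hg]
    have h1 : ⟪u, Q g⟫ = ⟪Q u, g⟫ := by
      conv_rhs => rw [← hQadj]
      exact (ContinuousLinearMap.adjoint_inner_left Q g u).symm
    have hQu : Q u = 0 := by
      rw [hudef, map_sub, ← ContinuousLinearMap.mul_apply Q Q, hQidem, sub_self]
    rw [ContinuousLinearMap.coe_coe, h1, hQu, inner_zero_left]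
  have hufst : u.fst = -((ContinuousLinearMap.adjoint X) u.snd) := by
    have hkey : ∀ x0 : H0, ⟪u.fst + (ContinuousLinearMap.adjoint X) u.snd, x0⟫ = 0 := by
      intro x0
      set s : WithLp 2 (H0 × H1) := (WithLp.equiv 2 (H0 × H1)).symm (x0, X x0) with hsdef
      have hs : s ∈ graphSubspace X := by
        rw [mem_graphSubspace_iff]
        rfl
      have h0 := hu_perp s hs
      rw [WithLp.prod_inner_apply] at h0
      rw [inner_add_left, ContinuousLinearMap.adjoint_inner_left X x0 u.snd]
      exact h0
    have h2 := hkey (u.fst + (ContinuousLinearMap.adjoint X) u.snd)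
    have h3 := inner_self_eq_zero.mp h2
    exact eq_neg_of_add_eq_zero_left h3
  have hPv := proj_formula P hP hPidem hPran h
  have hfstPQ : ((P - Q) h).fst = u.fst := by
    rw [ContinuousLinearMap.sub_apply, WithLp.sub_fst, hPv.1, hudef, WithLp.sub_fst]
  have hsndPQ : ((P - Q) h).snd = -v.snd := by
    rw [ContinuousLinearMap.sub_apply, WithLp.sub_snd, hPv.2, zero_sub]
  have hn1 : ‖(P - Q) h‖ ^ 2 = ‖u.fst‖ ^ 2 + ‖v.snd‖ ^ 2 := by
    rw [WithLp.prod_norm_sq_eq_of_L2, hfstPQ, hsndPQ, norm_neg]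
  have hhuv : h = u + v := by rw [hudef]; abel
  have hn2 : ‖h‖ ^ 2 = ‖u‖ ^ 2 + ‖v‖ ^ 2 := by
    conv_lhs => rw [hhuv]
    rw [norm_add_sq', hu_perp v hvmem]
    simp
  have hn3 : ‖u‖ ^ 2 = ‖u.fst‖ ^ 2 + ‖u.snd‖ ^ 2 := WithLp.prod_norm_sq_eq_of_L2 u
  have hn4 : ‖v‖ ^ 2 = ‖v.fst‖ ^ 2 + ‖v.snd‖ ^ 2 := WithLp.prod_norm_sq_eq_of_L2 v
  have ha : ‖u.fst‖ ≤ t * ‖u.snd‖ := by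
    rw [hufst, norm_neg]
    have := (ContinuousLinearMap.adjoint X).le_opNorm u.snd
    rwa [hadjn] at this
  have hb : ‖v.snd‖ ≤ t * ‖v.fst‖ := by
    rw [hvsnd]
    exact htdef ▸ X.le_opNorm v.fst
  have ha2 : ‖u.fst‖ ^ 2 ≤ t ^ 2 * ‖u.snd‖ ^ 2 := by nlinarith [norm_nonneg u.fst, norm_nonneg u.snd]
  have hb2 : ‖v.snd‖ ^ 2 ≤ t ^ 2 * ‖v.fst‖ ^ 2 := by nlinarith [norm_nonneg v.snd, norm_nonneg v.fst]
  have hsq : ‖(P - Q) h‖ ^ 2 ≤ (c * ‖h‖) ^ 2 := by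
    rw [mul_pow, hc2, div_mul_eq_mul_div, le_div_iff₀ htpos, hn1]
    have hh2 : ‖h‖ ^ 2 = ‖u.fst‖ ^ 2 + ‖u.snd‖ ^ 2 + ‖v.fst‖ ^ 2 + ‖v.snd‖ ^ 2 := by
      rw [hn2, hn3, hn4]; ring
    rw [hh2]
    nlinarith [ha2, hb2]
  calc ‖(P - Q) h‖ = Real.sqrt (‖(P - Q) h‖ ^ 2) := (Real.sqrt_sq (norm_nonneg _)).symm
    _ ≤ Real.sqrt ((c * ‖h‖) ^ 2) := Real.sqrt_le_sqrt hsq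
    _ = c * ‖h‖ := Real.sqrt_sq (by positivity)

end DavisKahanAux

local notation "⟪" x ", " y "⟫" => @inner ℂ _ _ x y

open DavisKahanAux

set_option maxHeartbeats 2000000 in
/-- **Davis–Kahan `sin` bound for projections** -/
theorem norm_proj_sub_proj_sin_bound
    {H0 H1 : Type*}
    [NormedAddCommGroup H0] [InnerProductSpace ℂ H0] [CompleteSpace H0]
    [NormedAddCommGroup H1] [InnerProductSpace ℂ H1] [CompleteSpace H1]
    [TopologicalSpace.SeparableSpace H0] [TopologicalSpace.SeparableSpace H1]
    (A0 : H0 →L[ℂ] H0) (A1 : H1 →L[ℂ] H1) (V : H1 →L[ℂ] H0) (lam : ℝ)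
    (hA0 : IsSelfAdjoint A0) (hA1 : IsSelfAdjoint A1)
    (hspec0 : ∀ z ∈ spectrum ℂ A0, z.re ≤ lam)
    (hspec1 : ∀ z ∈ spectrum ℂ A1, lam ≤ z.re)
    (d : ℝ) (hd : d = sInf (Set.image2 dist (spectrum ℂ A0) (spectrum ℂ A1)))
    (hdpos : 0 < d)
    (X : H0 →L[ℂ] H1) (hX : ‖X‖ ≤ 1)
    (hRic : A1 ∘L X - X ∘L A0 - X ∘L V ∘L X + ContinuousLinearMap.adjoint V = 0)
    (P Q : WithLp 2 (H0 × H1) →L[ℂ] WithLp 2 (H0 × H1))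
    (hP : IsSelfAdjoint P) (hPidem : IsIdempotentElem P)
    (hPran : LinearMap.range (P : WithLp 2 (H0 × H1) →ₗ[ℂ] WithLp 2 (H0 × H1)) = graphSubspace (0 : H0 →L[ℂ] H1))
    (hQ : IsSelfAdjoint Q) (hQidem : IsIdempotentElem Q)
    (hQran : LinearMap.range (Q : WithLp 2 (H0 × H1) →ₗ[ℂ] WithLp 2 (H0 × H1)) = graphSubspace X) :
    ‖P - Q‖ ≤ Real.sin ((1 / 2) * Real.arctan (2 * ‖V‖ / d)) ∧
    Real.sin ((1 / 2) * Real.arctan (2 * ‖V‖ / d)) < Real.sqrt 2 / 2 := by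
  have hπ := Real.pi_pos
  set t : ℝ := ‖X‖ with htdef
  have ht0 : (0:ℝ) ≤ t := norm_nonneg _
  set φ : ℝ := (1 / 2) * Real.arctan (2 * ‖V‖ / d) with hφdef
  -- trigonometric facts
  have harg0 : (0:ℝ) ≤ 2 * ‖V‖ / d := by positivity
  have hφ0 : 0 ≤ φ := by
    rw [hφdef]
    have h0 : Real.arctan 0 ≤ Real.arctan (2 * ‖V‖ / d) :=
      Real.arctan_strictMono.monotone harg0
    rw [Real.arctan_zero] at h0
    linarith
  have hφlt : φ < Real.pi / 4 := by
    rw [hφdef]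
    have := Real.arctan_lt_pi_div_two (2 * ‖V‖ / d)
    linarith
  set τ : ℝ := Real.tan φ with hτdef
  have hτ0 : 0 ≤ τ := Real.tan_nonneg_of_nonneg_of_le_pi_div_two hφ0 (by linarith)
  have hτ1 : τ < 1 := by
    have := Real.tan_lt_tan_of_nonneg_of_lt_pi_div_two hφ0 (by linarith) hφlt
    rwa [Real.tan_pi_div_four] at this
  have hτsq : 0 < 1 - τ ^ 2 := by nlinarith
  have hident : ‖V‖ * (1 - τ ^ 2) = d * τ := by
    have h2φ : Real.tan (2 * φ) = 2 * ‖V‖ / d := by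
      have h2 : 2 * φ = Real.arctan (2 * ‖V‖ / d) := by rw [hφdef]; ring
      rw [h2, Real.tan_arctan]
    rw [Real.tan_two_mul] at h2φ
    rw [← hτdef] at h2φ
    have h3 := (div_eq_div_iff hτsq.ne' (hdpos.ne' : d ≠ 0)).mp h2φ
    linarith
  -- sin φ = τ / sqrt (1 + τ^2)
  have hφarctan : φ = Real.arctan τ := by
    rw [hτdef, Real.arctan_tan (by linarith) (by linarith)]
  -- the Riccati bound on ‖X‖
  have hne : (Set.image2 dist (spectrum ℂ A0) (spectrum ℂ A1)).Nonempty := by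
    by_contra hcon
    rw [Set.not_nonempty_iff_eq_empty] at hcon
    rw [hcon, Real.sInf_empty] at hd
    linarith
  obtain ⟨q, hq⟩ := hne
  obtain ⟨z0, hz0, z1, hz1, rfl⟩ := hq
  have hnt1 : Nontrivial H1 := by
    by_contra hcon
    rw [not_nontrivial_iff_subsingleton] at hcon
    exact spectrum.mem_iff.mp hz1 (isUnit_of_subsingleton _)
  have hnt0 : Nontrivial H0 := by
    by_contra hcon
    rw [not_nontrivial_iff_subsingleton] at hcon
    exact spectrum.mem_iff.mp hz0 (isUnit_of_subsingleton _)
  set S1 : Set ℝ := Complex.re '' (spectrum ℂ A1) with hS1def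
  have hS1ne : S1.Nonempty := ⟨z1.re, z1, hz1, rfl⟩
  have hS1bdd : BddBelow S1 := by
    refine ⟨-‖A1‖, ?_⟩
    rintro r ⟨z, hz, rfl⟩
    have h1 := spectrum.norm_le_norm_of_mem hz
    have h2 : |z.re| ≤ ‖z‖ := by
      exact Complex.abs_re_le_norm z
    have := neg_abs_le z.re
    linarith
  set b : ℝ := sInf S1 with hbdef
  have hb_le : ∀ z ∈ spectrum ℂ A1, b ≤ z.re := fun z hz =>
    csInf_le hS1bdd ⟨z, hz, rfl⟩
  have hpair : ∀ z' ∈ spectrum ℂ A0, ∀ w' ∈ spectrum ℂ A1, d + z'.re ≤ w'.re := by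
    intro z' hz' w' hw'
    have hmem : dist z' w' ∈ Set.image2 dist (spectrum ℂ A0) (spectrum ℂ A1) :=
      Set.mem_image2_of_mem hz' hw'
    have hbddd : BddBelow (Set.image2 dist (spectrum ℂ A0) (spectrum ℂ A1)) := by
      refine ⟨0, ?_⟩
      rintro r ⟨a, _, b', _, rfl⟩
      exact dist_nonneg
    have hle : d ≤ dist z' w' := hd ▸ csInf_le hbddd hmem
    have hz'' : z' = (z'.re : ℂ) := hA0.mem_spectrum_eq_re hz'
    have hw'' : w' = (w'.re : ℂ) := hA1.mem_spectrum_eq_re hw'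
    have hdist : dist z' w' = |z'.re - w'.re| := by
      rw [hz'', hw'']
      rw [Complex.dist_of_im_eq (by simp), Complex.ofReal_re, Complex.ofReal_re,
        Real.dist_eq]
    have hzw : z'.re ≤ w'.re := le_trans (hspec0 z' hz') (hspec1 w' hw')
    rw [hdist, abs_of_nonpos (by linarith)] at hle
    linarith
  have hAb0 : ∀ z ∈ spectrum ℂ A0, z.re ≤ b - d := by
    intro z hz
    have : z.re + d ≤ b := by
      apply le_csInf hS1ne
      rintro r ⟨w, hw, rfl⟩
      have := hpair z hz w hw
      linarith
    linarith
  have f0 : ∀ x : H0, (⟪A0 x, x⟫).re ≤ (b - d) * ‖x‖ ^ 2 :=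
    numRange_le_of_spectrum_re_le A0 hA0 (b - d) hAb0
  have f1 : ∀ y : H1, b * ‖y‖ ^ 2 ≤ (⟪A1 y, y⟫).re :=
    numRange_ge_of_spectrum_re_ge A1 hA1 b hb_le
  have hRic' : ∀ x : H0, A1 (X x) = X (A0 x) + X (V (X x)) -
      (ContinuousLinearMap.adjoint V) x := by
    intro x
    have h := ContinuousLinearMap.ext_iff.mp hRic x
    simp only [ContinuousLinearMap.add_apply, ContinuousLinearMap.sub_apply,
      ContinuousLinearMap.comp_apply, ContinuousLinearMap.zero_apply] at h
    have h2 : A1 (X x) - X (A0 x) - X (V (X x)) +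
        (ContinuousLinearMap.adjoint V) x = 0 := h
    rw [← sub_eq_zero]
    rw [← h2]
    abel
  have hkey := riccati_key_estimate A0 A1 V X hX hRic' b d hdpos f0 f1
  -- ‖X‖ ≤ τ
  have htτ : t ≤ τ := by
    by_contra hcon
    push_neg at hcon  -- τ < t
    have htpos' : 0 < t := lt_of_le_of_lt hτ0 hcon
    have hτ2t2 : τ ^ 2 < t ^ 2 := by nlinarith
    have hstep : ‖V‖ * t * (1 - t ^ 2) ≤ ‖V‖ * t * (1 - τ ^ 2) := by
      apply mul_le_mul_of_nonneg_left (by linarith) (by positivity)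
    have heq : ‖V‖ * t * (1 - τ ^ 2) = t * (d * τ) := by
      rw [← hident]; ring
    have : d * t ^ 2 ≤ t * (d * τ) := by
      calc d * t ^ 2 ≤ ‖V‖ * t * (1 - t ^ 2) := hkey
        _ ≤ ‖V‖ * t * (1 - τ ^ 2) := hstep
        _ = t * (d * τ) := heq
    nlinarith [mul_pos htpos' hdpos]
  -- assemble
  have hPQ := proj_diff_le X P Q hP hPidem hPran hQ hQidem hQran
  have hsin_t : Real.sqrt (t ^ 2 / (1 + t ^ 2)) = Real.sin (Real.arctan t) := by
    rw [Real.sin_arctan, Real.sqrt_div (by positivity), Real.sqrt_sq ht0]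
  have harc_t1 : -(Real.pi / 2) ≤ Real.arctan t :=
    (Real.neg_pi_div_two_lt_arctan t).le
  have harc_τ2 : Real.arctan τ ≤ Real.pi / 2 :=
    (Real.arctan_lt_pi_div_two τ).le
  have hmono : Real.arctan t ≤ Real.arctan τ := Real.arctan_strictMono.monotone htτ
  have hsin_le : Real.sin (Real.arctan t) ≤ Real.sin (Real.arctan τ) :=
    Real.sin_le_sin_of_le_of_le_pi_div_two harc_t1 harc_τ2 hmono
  constructor
  · calc ‖P - Q‖ ≤ Real.sqrt (t ^ 2 / (1 + t ^ 2)) := hPQ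
      _ = Real.sin (Real.arctan t) := hsin_t
      _ ≤ Real.sin (Real.arctan τ) := hsin_le
      _ = Real.sin φ := by rw [← hφarctan]
  · have hmemφ : φ ∈ Set.Icc (-(Real.pi / 2)) (Real.pi / 2) :=
      Set.mem_Icc.mpr ⟨by linarith, by linarith⟩
    have hmem4 : Real.pi / 4 ∈ Set.Icc (-(Real.pi / 2)) (Real.pi / 2) :=
      Set.mem_Icc.mpr ⟨by linarith, by linarith⟩
    have hlt := Real.strictMonoOn_sin hmemφ hmem4 hφlt
    rwa [Real.sin_pi_div_four] at hlt
end

section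
/- Under the stated block-operator hypotheses, let X be a contractive solution of the Riccati equation A1 X − X A0 − X V X + V* = 0. Then: ker(I − X* X) ⊆ ker(A0 − λ); X maps ker(I − X* X) into ker(A1 − λ); ker(I − X* X) ⊆ ker(X V X − V*); and symmetrically ker(I − X X*) ⊆ ker(A1 − λ), X* maps ker(I − X X*) into ker(A0 − λ), and ker(I − X X*) ⊆ ker(X* V* X* − V). -/
open ContinuousLinearMap
open scoped InnerProductSpace

section RiccatiAux

variable {H : Type*} [NormedAddCommGroup H] [InnerProductSpace ℂ H] [CompleteSpace H]

private lemma riccati_aux_isPositive (A : H →L[ℂ] H) (lam : ℝ) (hA : IsSelfAdjoint A)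
    (hspec : ∀ z ∈ spectrum ℂ A, z.re ≤ lam) :
    ((lam : ℂ) • (1 : H →L[ℂ] H) - A).IsPositive := by
  have hone : IsSelfAdjoint (1 : H →L[ℂ] H) := IsSelfAdjoint.one _
  have hsmul : IsSelfAdjoint ((lam : ℂ) • (1 : H →L[ℂ] H)) := by
    rw [IsSelfAdjoint, star_smul, hone.star_eq, Complex.star_def, Complex.conj_ofReal]
  have hsa : IsSelfAdjoint ((lam : ℂ) • (1 : H →L[ℂ] H) - A) := hsmul.sub hA
  rw [← ContinuousLinearMap.nonneg_iff_isPositive]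
  rw [StarOrderedRing.nonneg_iff_spectrum_nonneg (R := ℝ) _ hsa]
  intro x hx
  have hx' : algebraMap ℝ ℂ x ∈ spectrum ℂ ((lam : ℂ) • (1 : H →L[ℂ] H) - A) :=
    spectrum.algebraMap_mem ℂ hx
  rw [show (lam : ℂ) • (1 : H →L[ℂ] H) = algebraMap ℂ _ (lam : ℂ) from
    (Algebra.algebraMap_eq_smul_one _).symm, ← spectrum.singleton_sub_eq] at hx'
  obtain ⟨l, hl, z, hz, hxz⟩ := hx'
  rw [Set.mem_singleton_iff] at hl
  subst hl
  have h1 : lam - z.re = x := by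
    have := congrArg Complex.re hxz
    simpa using this
  have h2 := hspec z hz
  linarith

set_option synthInstance.maxHeartbeats 1000000 in
private lemma riccati_aux_eq_zero {T : H →L[ℂ] H} (hT : T.IsPositive) {f : H}
    (h : (⟪f, T f⟫_ℂ).re = 0) : T f = 0 := by
  have h0 : (0 : H →L[ℂ] H) ≤ T := (ContinuousLinearMap.nonneg_iff_isPositive T).mpr hT
  set S := CFC.sqrt T with hSdef
  have hS : S * S = T := CFC.sqrt_mul_sqrt_self T h0
  have hSnn : (0 : H →L[ℂ] H) ≤ S := CFC.sqrt_nonneg T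
  have hSsa : IsSelfAdjoint S := IsSelfAdjoint.of_nonneg hSnn
  have hadj : ContinuousLinearMap.adjoint S = S := hSsa.adjoint_eq
  have hreal := ((ContinuousLinearMap.isPositive_iff_complex T).mp hT f).1
  have h1 : RCLike.re ⟪T f, f⟫_ℂ = 0 := by
    rw [inner_re_symm]; simpa [RCLike.re_to_complex] using h
  have hTf : ⟪T f, f⟫_ℂ = 0 := by rw [← hreal, h1]; simp
  have hSS : S (S f) = T f := by rw [← hS]; rfl
  have hz : ⟪S f, S f⟫_ℂ = 0 := by
    rw [← ContinuousLinearMap.adjoint_inner_left S f (S f), hadj, hSS, hTf]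
  have hSf : S f = 0 := inner_self_eq_zero.mp hz
  rw [← hSS, hSf, map_zero]

end RiccatiAux

private lemma riccati_core {H0 H1 : Type*}
    [NormedAddCommGroup H0] [InnerProductSpace ℂ H0] [CompleteSpace H0]
    [NormedAddCommGroup H1] [InnerProductSpace ℂ H1] [CompleteSpace H1]
    (A0 : H0 →L[ℂ] H0) (A1 : H1 →L[ℂ] H1) (V : H1 →L[ℂ] H0) (lam : ℝ)
    (hA0 : IsSelfAdjoint A0) (hA1 : IsSelfAdjoint A1)
    (hspec0 : ∀ z ∈ spectrum ℂ A0, z.re ≤ lam)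
    (hspec1 : ∀ z ∈ spectrum ℂ A1, lam ≤ z.re)
    (X : H0 →L[ℂ] H1)
    (hRic : A1 ∘L X - X ∘L A0 - X ∘L V ∘L X + ContinuousLinearMap.adjoint V = 0)
    (f : H0) (hf : ContinuousLinearMap.adjoint X (X f) = f) :
    A0 f = (lam : ℂ) • f ∧ A1 (X f) = (lam : ℂ) • (X f) ∧
      X (V (X f)) = ContinuousLinearMap.adjoint V f := by
  have hP0 : ((lam : ℂ) • (1 : H0 →L[ℂ] H0) - A0).IsPositive :=
    riccati_aux_isPositive A0 lam hA0 hspec0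
  have hP1 : (A1 - (lam : ℂ) • (1 : H1 →L[ℂ] H1)).IsPositive := by
    have h := riccati_aux_isPositive (-A1) (-lam) hA1.neg ?_
    · have e : ((-lam : ℝ) : ℂ) • (1 : H1 →L[ℂ] H1) - (-A1)
          = A1 - (lam : ℂ) • (1 : H1 →L[ℂ] H1) := by
        push_cast
        module
      rwa [e] at h
    · intro z hz
      have : -z ∈ spectrum ℂ A1 := by
        rw [← spectrum.neg_eq] at hz
        simpa using hz
      have := hspec1 _ this
      simp only [Complex.neg_re] at this
      linarith
  -- the Riccati equation applied at f
  have heq : A1 (X f) - X (A0 f) - X (V (X f)) + ContinuousLinearMap.adjoint V f = 0 := by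
    have := congrArg (fun (T : H0 →L[ℂ] H1) => T f) hRic
    simpa using this
  -- inner products with X f
  have hXX : ∀ y : H0, (⟪X f, X y⟫_ℂ) = ⟪f, y⟫_ℂ := fun y => by
    rw [← ContinuousLinearMap.adjoint_inner_left X y (X f), hf]
  have hmain : ⟪X f, A1 (X f)⟫_ℂ - ⟪f, A0 f⟫_ℂ - ⟪f, V (X f)⟫_ℂ
      + (starRingEnd ℂ) ⟪f, V (X f)⟫_ℂ = 0 := by
    have h := congrArg (fun v => (⟪X f, v⟫_ℂ)) heq
    simp only [inner_add_right, inner_sub_right, inner_zero_right] at h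
    rw [hXX (A0 f), hXX (V (X f)),
      ContinuousLinearMap.adjoint_inner_right V (X f) f,
      ← inner_conj_symm (V (X f)) f] at h
    exact h
  -- real parts
  set a := ⟪f, V (X f)⟫_ℂ with ha
  have hre : (⟪X f, A1 (X f)⟫_ℂ).re = (⟪f, A0 f⟫_ℂ).re := by
    have := congrArg Complex.re hmain
    simp only [Complex.add_re, Complex.sub_re, Complex.conj_re, Complex.zero_re] at this
    linarith
  have hXfXf : ⟪X f, X f⟫_ℂ = ⟪f, f⟫_ℂ := hXX f
  -- p and q
  have hq0 : (0:ℝ) ≤ (⟪f, ((lam : ℂ) • (1 : H0 →L[ℂ] H0) - A0) f⟫_ℂ).re := by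
    have := hP0.re_inner_nonneg_right f
    simpa only [RCLike.re_to_complex] using this
  have hp0 : (0:ℝ) ≤ (⟪X f, (A1 - (lam : ℂ) • (1 : H1 →L[ℂ] H1)) (X f)⟫_ℂ).re := by
    have := hP1.re_inner_nonneg_right (X f)
    simpa only [RCLike.re_to_complex] using this
  have hqv : (⟪f, ((lam : ℂ) • (1 : H0 →L[ℂ] H0) - A0) f⟫_ℂ).re
      = lam * (⟪f, f⟫_ℂ).re - (⟪f, A0 f⟫_ℂ).re := by
    simp only [ContinuousLinearMap.sub_apply, ContinuousLinearMap.smul_apply,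
      ContinuousLinearMap.one_apply, inner_sub_right, inner_smul_right, Complex.sub_re,
      Complex.mul_re, Complex.ofReal_re, Complex.ofReal_im, zero_mul, sub_zero]
  have hpv : (⟪X f, (A1 - (lam : ℂ) • (1 : H1 →L[ℂ] H1)) (X f)⟫_ℂ).re
      = (⟪X f, A1 (X f)⟫_ℂ).re - lam * (⟪f, f⟫_ℂ).re := by
    simp only [ContinuousLinearMap.sub_apply, ContinuousLinearMap.smul_apply,
      ContinuousLinearMap.one_apply, inner_sub_right, inner_smul_right, hXfXf, Complex.sub_re,
      Complex.mul_re, Complex.ofReal_re, Complex.ofReal_im, zero_mul, sub_zero]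
  have hq : (⟪f, ((lam : ℂ) • (1 : H0 →L[ℂ] H0) - A0) f⟫_ℂ).re = 0 := by
    rw [hqv]; rw [hpv] at hp0; linarith
  have hp : (⟪X f, (A1 - (lam : ℂ) • (1 : H1 →L[ℂ] H1)) (X f)⟫_ℂ).re = 0 := by
    rw [hpv]; rw [hqv] at hq0; linarith
  have hz0 : ((lam : ℂ) • (1 : H0 →L[ℂ] H0) - A0) f = 0 := riccati_aux_eq_zero hP0 hq
  have hz1 : (A1 - (lam : ℂ) • (1 : H1 →L[ℂ] H1)) (X f) = 0 := riccati_aux_eq_zero hP1 hp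
  have hA0f : A0 f = (lam : ℂ) • f := by
    have h' : (lam : ℂ) • f - A0 f = 0 := by simpa using hz0
    rw [sub_eq_zero] at h'
    exact h'.symm
  have hA1f : A1 (X f) = (lam : ℂ) • (X f) := by
    have h' : A1 (X f) - (lam : ℂ) • (X f) = 0 := by simpa using hz1
    rwa [sub_eq_zero] at h'
  refine ⟨hA0f, hA1f, ?_⟩
  have := heq
  rw [hA0f, hA1f, map_smul] at this
  have h' : -(X (V (X f))) + ContinuousLinearMap.adjoint V f = 0 := by
    rw [← this]
    abel
  rw [neg_add_eq_zero] at h'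
  exact h'

/-- **Properties of `ker(I - X*X)` and `ker(I - XX*)`** (Lemma 2.7): for a
contractive solution `X` of the Riccati equation, `ker(I - X*X) ⊆ ker(A0-λ)`,
`X` maps `ker(I - X*X)` into `ker(A1-λ)`, `ker(I - X*X) ⊆ ker(XVX - V*)`, and
the symmetric statements for `ker(I - XX*)`. -/
theorem ker_one_sub_adjoint_mul_properties
    {H0 H1 : Type*}
    [NormedAddCommGroup H0] [InnerProductSpace ℂ H0] [CompleteSpace H0]
    [NormedAddCommGroup H1] [InnerProductSpace ℂ H1] [CompleteSpace H1]
    [TopologicalSpace.SeparableSpace H0] [TopologicalSpace.SeparableSpace H1]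
    (A0 : H0 →L[ℂ] H0) (A1 : H1 →L[ℂ] H1) (V : H1 →L[ℂ] H0) (lam : ℝ)
    (hA0 : IsSelfAdjoint A0) (hA1 : IsSelfAdjoint A1)
    (hspec0 : ∀ z ∈ spectrum ℂ A0, z.re ≤ lam)
    (hspec1 : ∀ z ∈ spectrum ℂ A1, lam ≤ z.re)
    (X : H0 →L[ℂ] H1) (hX : ‖X‖ ≤ 1)
    (hRic : A1 ∘L X - X ∘L A0 - X ∘L V ∘L X + ContinuousLinearMap.adjoint V = 0) :
    (∀ f : H0, ContinuousLinearMap.adjoint X (X f) = f → A0 f = (lam : ℂ) • f) ∧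
    (∀ f : H0, ContinuousLinearMap.adjoint X (X f) = f → A1 (X f) = (lam : ℂ) • (X f)) ∧
    (∀ f : H0, ContinuousLinearMap.adjoint X (X f) = f →
      X (V (X f)) = ContinuousLinearMap.adjoint V f) ∧
    (∀ g : H1, X (ContinuousLinearMap.adjoint X g) = g → A1 g = (lam : ℂ) • g) ∧
    (∀ g : H1, X (ContinuousLinearMap.adjoint X g) = g →
      A0 (ContinuousLinearMap.adjoint X g) = (lam : ℂ) • (ContinuousLinearMap.adjoint X g)) ∧
    (∀ g : H1, X (ContinuousLinearMap.adjoint X g) = g →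
      ContinuousLinearMap.adjoint X (ContinuousLinearMap.adjoint V
        (ContinuousLinearMap.adjoint X g)) = V g) := by
  -- the symmetric Riccati equation for `X*` with data `(-A1, -A0, V*, -lam)`
  have hRic' := congrArg (fun T : H0 →L[ℂ] H1 => ContinuousLinearMap.adjoint T) hRic
  simp only [map_sub, map_add, map_zero, adjoint_comp, adjoint_adjoint,
    hA0.adjoint_eq, hA1.adjoint_eq] at hRic'
  have hRic2 : (-A0) ∘L (ContinuousLinearMap.adjoint X)
      - (ContinuousLinearMap.adjoint X) ∘L (-A1)
      - (ContinuousLinearMap.adjoint X) ∘L (ContinuousLinearMap.adjoint V)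
        ∘L (ContinuousLinearMap.adjoint X)
      + ContinuousLinearMap.adjoint (ContinuousLinearMap.adjoint V) = 0 := by
    rw [adjoint_adjoint, ← ContinuousLinearMap.comp_assoc]
    simp only [ContinuousLinearMap.neg_comp, ContinuousLinearMap.comp_neg, sub_neg_eq_add]
    have h := hRic'
    abel_nf at h ⊢
    exact h
  have hspec1' : ∀ z ∈ spectrum ℂ (-A1), z.re ≤ -lam := by
    intro z hz
    have hz' : -z ∈ spectrum ℂ A1 := by
      rw [← spectrum.neg_eq] at hz; simpa using hz
    have := hspec1 _ hz'
    simp only [Complex.neg_re] at this; linarith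
  have hspec0' : ∀ z ∈ spectrum ℂ (-A0), -lam ≤ z.re := by
    intro z hz
    have hz' : -z ∈ spectrum ℂ A0 := by
      rw [← spectrum.neg_eq] at hz; simpa using hz
    have := hspec0 _ hz'
    simp only [Complex.neg_re] at this; linarith
  have core2 := fun (g : H1) (hg : X (ContinuousLinearMap.adjoint X g) = g) =>
    riccati_core (-A1) (-A0) (ContinuousLinearMap.adjoint V) (-lam) hA1.neg hA0.neg
      hspec1' hspec0' (ContinuousLinearMap.adjoint X) hRic2 g
      (by rw [adjoint_adjoint]; exact hg)
  refine ⟨fun f hf => (riccati_core A0 A1 V lam hA0 hA1 hspec0 hspec1 X hRic f hf).1,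
    fun f hf => (riccati_core A0 A1 V lam hA0 hA1 hspec0 hspec1 X hRic f hf).2.1,
    fun f hf => (riccati_core A0 A1 V lam hA0 hA1 hspec0 hspec1 X hRic f hf).2.2,
    fun g hg => ?_, fun g hg => ?_, fun g hg => ?_⟩
  · have h := (core2 g hg).1
    simp only [ContinuousLinearMap.neg_apply, Complex.ofReal_neg, neg_smul] at h
    exact neg_injective h
  · have h := (core2 g hg).2.1
    simp only [ContinuousLinearMap.neg_apply, Complex.ofReal_neg, neg_smul] at h
    exact neg_injective h
  · have h := (core2 g hg).2.2
    rwa [adjoint_adjoint] at h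
end

section
/- Under the stated block-operator hypotheses, let X be a contractive solution of the Riccati equation A1 X − X A0 − X V X + V* = 0. Then the closed subspace ker(I − X* X) of H0 reduces both the operators V X and V V* (i.e. ker(I − X* X) and its orthogonal complement in H0 are invariant under V X and under V V*), and the closed subspace ker(I − X X*) of H1 reduces both the operators X* V* and V* V. -/
open ContinuousLinearMap

local notation "⟪" x ", " y "⟫" => @inner ℂ _ _ x y

set_option maxHeartbeats 1000000 in
set_option synthInstance.maxHeartbeats 400000 in
private lemma riccati_aux_isPositive_of_spectrum
    {H : Type*} [NormedAddCommGroup H] [InnerProductSpace ℂ H] [CompleteSpace H]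
    (A : H →L[ℂ] H) (hA : IsSelfAdjoint A) (mu : ℝ)
    (h : ∀ z ∈ spectrum ℂ A, mu ≤ z.re) :
    IsPositive (A - (mu:ℂ) • 1) := by
  have hsa : IsSelfAdjoint (A - (mu:ℂ) • 1) := by
    refine hA.sub ?_
    exact IsSelfAdjoint.smul (Complex.conj_ofReal mu) (IsSelfAdjoint.one _)
  rw [← nonneg_iff_isPositive]
  rw [StarOrderedRing.nonneg_iff_spectrum_nonneg (R := ℝ) _ hsa]
  intro t ht
  have himg := hsa.spectrumRestricts.algebraMap_image
  have htC : (t : ℂ) ∈ spectrum ℂ (A - (mu:ℂ) • 1) := by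
    rw [← himg]; exact ⟨t, ht, rfl⟩
  rw [show ((mu:ℂ) • (1 : H →L[ℂ] H)) = algebraMap ℂ (H →L[ℂ] H) (mu:ℂ) from
    (Algebra.algebraMap_eq_smul_one _).symm, ← spectrum.sub_singleton_eq] at htC
  obtain ⟨z, hz, w, hw, hzw⟩ := Set.mem_sub.mp htC
  rw [Set.mem_singleton_iff] at hw
  subst hw
  have hre := h z hz
  have h0 : 0 ≤ ((z - (mu:ℂ)).re) := by
    rw [Complex.sub_re, Complex.ofReal_re]; linarith
  rw [hzw] at h0
  simpa using h0

private lemma riccati_aux_apply_eq_zero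
    {H : Type*} [NormedAddCommGroup H] [InnerProductSpace ℂ H] [CompleteSpace H]
    (T : H →L[ℂ] H) (hT : IsPositive T) (x : H) (hx : Complex.re ⟪T x, x⟫ = 0) :
    T x = 0 := by
  have hsym : ∀ u v : H, ⟪T u, v⟫ = ⟪u, T v⟫ :=
    fun u v => isSelfAdjoint_iff_isSymmetric.mp hT.isSelfAdjoint u v
  have key : ∀ y : H, Complex.re ⟪T x, y⟫ = 0 := by
    intro y
    set a : ℝ := Complex.re ⟪T y, y⟫ with ha
    set b : ℝ := 2 * Complex.re ⟪T x, y⟫ with hb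
    have hq : ∀ t : ℝ, 0 ≤ a * (t * t) + b * t + 0 := by
      intro t
      have hnn := hT.re_inner_nonneg_left (x + (t:ℂ) • y)
      have hexp : Complex.re ⟪T (x + (t:ℂ) • y), x + (t:ℂ) • y⟫
          = a * (t * t) + b * t + 0 := by
        have hrev : Complex.re ⟪T y, x⟫ = Complex.re ⟪T x, y⟫ := by
          rw [hsym y x]
          have h2 : (⟪y, T x⟫ : ℂ) = starRingEnd ℂ ⟪T x, y⟫ := (inner_conj_symm _ _).symm
          rw [h2, Complex.conj_re]
        simp only [map_add, map_smul, inner_add_left, inner_add_right,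
          inner_smul_left, inner_smul_right, Complex.add_re, Complex.mul_re,
          Complex.conj_re, Complex.conj_im, Complex.ofReal_re, Complex.ofReal_im]
        rw [ha, hb]
        rw [hx] at *
        ring_nf
        rw [hrev]
        ring
      simp only [RCLike.re_to_complex] at hnn
      rw [hexp] at hnn
      exact hnn
    have hd := discrim_le_zero hq
    rw [discrim] at hd
    have : b = 0 := by nlinarith [sq_nonneg b]
    rw [hb] at this
    linarith [this]
  have hz := key (T x)
  have : ‖T x‖ ^ 2 = 0 := by
    rw [← inner_self_eq_norm_sq (𝕜 := ℂ) (T x)]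
    exact hz
  simpa using this

private lemma riccati_aux_perp_invariant
    {H : Type*} [NormedAddCommGroup H] [InnerProductSpace ℂ H] [CompleteSpace H]
    (T : H →L[ℂ] H) (U : Submodule ℂ H)
    (h : ∀ u ∈ U, ContinuousLinearMap.adjoint T u ∈ U) :
    ∀ v ∈ Uᗮ, T v ∈ Uᗮ := by
  intro v hv
  rw [Submodule.mem_orthogonal]
  intro u hu
  rw [← adjoint_inner_left T v u]
  exact (Submodule.mem_orthogonal U v).mp hv _ (h u hu)

set_option maxHeartbeats 2000000 in
/-- **Reducing subspaces associated with a contractive Riccati solution**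
(Lemma 2.7): `ker(I - X*X)` reduces `V X` and `V V*`, and `ker(I - X X*)`
reduces `V* X*` and `V* V`. -/
theorem ker_one_sub_adjoint_mul_reduces
    {H0 H1 : Type*}
    [NormedAddCommGroup H0] [InnerProductSpace ℂ H0] [CompleteSpace H0]
    [NormedAddCommGroup H1] [InnerProductSpace ℂ H1] [CompleteSpace H1]
    [TopologicalSpace.SeparableSpace H0] [TopologicalSpace.SeparableSpace H1]
    (A0 : H0 →L[ℂ] H0) (A1 : H1 →L[ℂ] H1) (V : H1 →L[ℂ] H0) (lam : ℝ)
    (hA0 : IsSelfAdjoint A0) (hA1 : IsSelfAdjoint A1)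
    (hspec0 : ∀ z ∈ spectrum ℂ A0, z.re ≤ lam)
    (hspec1 : ∀ z ∈ spectrum ℂ A1, lam ≤ z.re)
    (X : H0 →L[ℂ] H1) (hX : ‖X‖ ≤ 1)
    (hRic : A1 ∘L X - X ∘L A0 - X ∘L V ∘L X + ContinuousLinearMap.adjoint V = 0) :
    (∀ x ∈ LinearMap.ker ((ContinuousLinearMap.id ℂ H0 - ContinuousLinearMap.adjoint X ∘L X : H0 →L[ℂ] H0) : H0 →ₗ[ℂ] H0),
      (V ∘L X) x ∈
        LinearMap.ker ((ContinuousLinearMap.id ℂ H0 - ContinuousLinearMap.adjoint X ∘L X : H0 →L[ℂ] H0) : H0 →ₗ[ℂ] H0)) ∧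
    (∀ x ∈ (LinearMap.ker ((ContinuousLinearMap.id ℂ H0 - ContinuousLinearMap.adjoint X ∘L X : H0 →L[ℂ] H0) : H0 →ₗ[ℂ] H0))ᗮ,
      (V ∘L X) x ∈
        (LinearMap.ker ((ContinuousLinearMap.id ℂ H0 - ContinuousLinearMap.adjoint X ∘L X : H0 →L[ℂ] H0) : H0 →ₗ[ℂ] H0))ᗮ) ∧
    (∀ x ∈ LinearMap.ker ((ContinuousLinearMap.id ℂ H0 - ContinuousLinearMap.adjoint X ∘L X : H0 →L[ℂ] H0) : H0 →ₗ[ℂ] H0),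
      (V ∘L ContinuousLinearMap.adjoint V) x ∈
        LinearMap.ker ((ContinuousLinearMap.id ℂ H0 - ContinuousLinearMap.adjoint X ∘L X : H0 →L[ℂ] H0) : H0 →ₗ[ℂ] H0)) ∧
    (∀ x ∈ (LinearMap.ker ((ContinuousLinearMap.id ℂ H0 - ContinuousLinearMap.adjoint X ∘L X : H0 →L[ℂ] H0) : H0 →ₗ[ℂ] H0))ᗮ,
      (V ∘L ContinuousLinearMap.adjoint V) x ∈
        (LinearMap.ker ((ContinuousLinearMap.id ℂ H0 - ContinuousLinearMap.adjoint X ∘L X : H0 →L[ℂ] H0) : H0 →ₗ[ℂ] H0))ᗮ) ∧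
    (∀ y ∈ LinearMap.ker ((ContinuousLinearMap.id ℂ H1 - X ∘L ContinuousLinearMap.adjoint X : H1 →L[ℂ] H1) : H1 →ₗ[ℂ] H1),
      (ContinuousLinearMap.adjoint V ∘L ContinuousLinearMap.adjoint X) y ∈
        LinearMap.ker ((ContinuousLinearMap.id ℂ H1 - X ∘L ContinuousLinearMap.adjoint X : H1 →L[ℂ] H1) : H1 →ₗ[ℂ] H1)) ∧
    (∀ y ∈ (LinearMap.ker ((ContinuousLinearMap.id ℂ H1 - X ∘L ContinuousLinearMap.adjoint X : H1 →L[ℂ] H1) : H1 →ₗ[ℂ] H1))ᗮ,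
      (ContinuousLinearMap.adjoint V ∘L ContinuousLinearMap.adjoint X) y ∈
        (LinearMap.ker ((ContinuousLinearMap.id ℂ H1 - X ∘L ContinuousLinearMap.adjoint X : H1 →L[ℂ] H1) : H1 →ₗ[ℂ] H1))ᗮ) ∧
    (∀ y ∈ LinearMap.ker ((ContinuousLinearMap.id ℂ H1 - X ∘L ContinuousLinearMap.adjoint X : H1 →L[ℂ] H1) : H1 →ₗ[ℂ] H1),
      (ContinuousLinearMap.adjoint V ∘L V) y ∈
        LinearMap.ker ((ContinuousLinearMap.id ℂ H1 - X ∘L ContinuousLinearMap.adjoint X : H1 →L[ℂ] H1) : H1 →ₗ[ℂ] H1)) ∧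
    (∀ y ∈ (LinearMap.ker ((ContinuousLinearMap.id ℂ H1 - X ∘L ContinuousLinearMap.adjoint X : H1 →L[ℂ] H1) : H1 →ₗ[ℂ] H1))ᗮ,
      (ContinuousLinearMap.adjoint V ∘L V) y ∈
        (LinearMap.ker ((ContinuousLinearMap.id ℂ H1 - X ∘L ContinuousLinearMap.adjoint X : H1 →L[ℂ] H1) : H1 →ₗ[ℂ] H1))ᗮ) := by
  set Y := ContinuousLinearMap.adjoint X with hY
  set W := ContinuousLinearMap.adjoint V with hW
  -- pointwise Riccati equation
  have hRic' : ∀ u : H0, A1 (X u) - X (A0 u) - X (V (X u)) + W u = 0 := by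
    intro u
    have := ContinuousLinearMap.ext_iff.mp hRic u
    simpa [sub_apply, add_apply, comp_apply] using this
  -- pointwise adjoint Riccati equation
  have hRadj' : ∀ u : H1, Y (A1 u) - A0 (Y u) - Y (W (Y u)) + V u = 0 := by
    intro u
    have h' := congrArg ContinuousLinearMap.adjoint hRic
    simp only [hW, hY, map_sub, map_add, adjoint_comp, adjoint_adjoint, hA0.adjoint_eq,
      hA1.adjoint_eq, map_zero] at h'
    have := ContinuousLinearMap.ext_iff.mp h' u
    simpa [sub_apply, add_apply, comp_apply, ← hY, ← hW] using this
  -- positivity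
  have hQpos : IsPositive (A1 - (lam:ℂ) • 1) :=
    riccati_aux_isPositive_of_spectrum A1 hA1 lam hspec1
  have hPpos : IsPositive (-A0 - (((-lam : ℝ)) : ℂ) • (1 : H0 →L[ℂ] H0)) := by
    refine riccati_aux_isPositive_of_spectrum (-A0) hA0.neg (-lam) ?_
    intro z hz
    have hz' : -z ∈ spectrum ℂ A0 := by
      rw [← spectrum.neg_eq] at hz
      simpa using hz
    have := hspec0 (-z) hz'
    simp only [Complex.neg_re] at this
    linarith
  -- the key pointwise consequences on ker (1 - X*X)
  have key : ∀ x : H0, Y (X x) = x → W x = X (V (X x)) ∧ Y (W x) = V (X x) := by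
    intro x hx
    have hIso : ∀ w : H0, ⟪X x, X w⟫ = ⟪x, w⟫ := by
      intro w
      rw [← adjoint_inner_left X w (X x), ← hY, hx]
    have hip : ∀ u : H1, (⟪x, Y u⟫ : ℂ) = ⟪X x, u⟫ := by
      intro u
      rw [hY, adjoint_inner_right X x u]
    have eq1 := hRic' x
    have eq2 := hRadj' (X x)
    rw [hx] at eq2
    have eq3 := congrArg (fun v : H1 => Y v) eq1
    simp only [map_sub, map_add, map_zero] at eq3
    have s2 := congrArg (fun v : H0 => (⟪x, v⟫ : ℂ)) eq2
    have s3 := congrArg (fun v : H0 => (⟪x, v⟫ : ℂ)) eq3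
    simp only [inner_sub_right, inner_add_right, inner_zero_right, hip, hIso] at s2 s3
    have hkey : (⟪X x, A1 (X x)⟫ : ℂ) = ⟪x, A0 x⟫ := by
      linear_combination s2 / 2 + s3 / 2
    -- re of the two quadratic forms
    have hQform : Complex.re ⟪X x, (A1 - (lam:ℂ) • 1) (X x)⟫
        + Complex.re ⟪x, ((-A0) - (((-lam : ℝ)) : ℂ) • (1:H0 →L[ℂ] H0)) x⟫ = 0 := by
      have hnorm : (⟪X x, X x⟫ : ℂ) = ⟪x, x⟫ := hIso x
      simp only [sub_apply, smul_apply, ContinuousLinearMap.one_apply, inner_sub_right, inner_smul_right,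
        neg_apply, inner_neg_right]
      rw [hnorm, hkey]
      push_cast
      ring_nf
      simp
    have hQnn : 0 ≤ Complex.re ⟪X x, (A1 - (lam:ℂ) • 1) (X x)⟫ := by
      have := hQpos.re_inner_nonneg_right (X x)
      exact this
    have hPnn : 0 ≤ Complex.re ⟪x, ((-A0) - (((-lam : ℝ)) : ℂ) • (1:H0 →L[ℂ] H0)) x⟫ := by
      have := hPpos.re_inner_nonneg_right x
      exact this
    have hQzero : (A1 - (lam:ℂ) • 1) (X x) = 0 := by
      apply riccati_aux_apply_eq_zero _ hQpos
      have h1 : Complex.re ⟪X x, (A1 - (lam:ℂ) • 1) (X x)⟫ = 0 := by linarith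
      rw [← h1]
      have := inner_re_symm (𝕜 := ℂ) ((A1 - (lam:ℂ) • 1) (X x)) (X x)
      exact this
    have hPzero : ((-A0) - (((-lam : ℝ)) : ℂ) • (1:H0 →L[ℂ] H0)) x = 0 := by
      apply riccati_aux_apply_eq_zero _ hPpos
      have h1 : Complex.re ⟪x, ((-A0) - (((-lam : ℝ)) : ℂ) • (1:H0 →L[ℂ] H0)) x⟫ = 0 := by linarith
      rw [← h1]
      have := inner_re_symm (𝕜 := ℂ) (((-A0) - (((-lam : ℝ)) : ℂ) • (1:H0 →L[ℂ] H0)) x) x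
      exact this
    have hA1x : A1 (X x) = (lam:ℂ) • (X x) := by
      have h2 := hQzero
      simp only [sub_apply, smul_apply, one_apply] at h2
      exact sub_eq_zero.mp h2
    have hA0x : A0 x = (lam:ℂ) • x := by
      have h2 := hPzero
      simp only [sub_apply, smul_apply, one_apply, neg_apply] at h2
      push_cast at h2
      rw [neg_smul, sub_neg_eq_add] at h2
      exact neg_add_eq_zero.mp h2
    have e1 := hRic' x
    rw [hA1x, hA0x, map_smul] at e1
    simp only [sub_self, zero_sub, neg_add_eq_zero] at e1
    have e2 := hRadj' (X x)
    rw [hx, hA1x, map_smul, hx, hA0x] at e2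
    simp only [sub_self, zero_sub, neg_add_eq_zero] at e2
    exact ⟨e1.symm, e2⟩
  -- invariance of ker(1 - X*X) under V X
  have m0VX : ∀ z : H0, Y (X z) = z → Y (X (V (X z))) = V (X z) := by
    intro z hz
    rw [← (key z hz).1]
    exact (key z hz).2
  have m1 : ∀ z : H0, Y (X z) = z → X (Y (X (V (X z)))) = X (V (X z)) :=
    fun z hz => congrArg X (m0VX z hz)
  have mem0 : ∀ z : H0,
      z ∈ LinearMap.ker ((ContinuousLinearMap.id ℂ H0 - Y ∘L X : H0 →L[ℂ] H0) : H0 →ₗ[ℂ] H0) ↔ Y (X z) = z := by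
    intro z
    simp only [LinearMap.mem_ker, ContinuousLinearMap.coe_coe, sub_apply, comp_apply,
      ContinuousLinearMap.id_apply, sub_eq_zero]
    exact eq_comm
  have mem1 : ∀ z : H1,
      z ∈ LinearMap.ker ((ContinuousLinearMap.id ℂ H1 - X ∘L Y : H1 →L[ℂ] H1) : H1 →ₗ[ℂ] H1) ↔ X (Y z) = z := by
    intro z
    simp only [LinearMap.mem_ker, ContinuousLinearMap.coe_coe, sub_apply, comp_apply,
      ContinuousLinearMap.id_apply, sub_eq_zero]
    exact eq_comm
  have g1 : ∀ x ∈ LinearMap.ker ((ContinuousLinearMap.id ℂ H0 - Y ∘L X : H0 →L[ℂ] H0) : H0 →ₗ[ℂ] H0),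
      (V ∘L X) x ∈ LinearMap.ker ((ContinuousLinearMap.id ℂ H0 - Y ∘L X : H0 →L[ℂ] H0) : H0 →ₗ[ℂ] H0) := by
    intro x hx
    rw [mem0] at hx ⊢
    simp only [comp_apply]
    exact m0VX x hx
  have g3 : ∀ x ∈ LinearMap.ker ((ContinuousLinearMap.id ℂ H0 - Y ∘L X : H0 →L[ℂ] H0) : H0 →ₗ[ℂ] H0),
      (V ∘L W) x ∈ LinearMap.ker ((ContinuousLinearMap.id ℂ H0 - Y ∘L X : H0 →L[ℂ] H0) : H0 →ₗ[ℂ] H0) := by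
    intro x hx
    rw [mem0] at hx ⊢
    simp only [comp_apply]
    rw [(key x hx).1]
    exact m0VX (V (X x)) (m0VX x hx)
  have g5 : ∀ y ∈ LinearMap.ker ((ContinuousLinearMap.id ℂ H1 - X ∘L Y : H1 →L[ℂ] H1) : H1 →ₗ[ℂ] H1),
      (W ∘L Y) y ∈ LinearMap.ker ((ContinuousLinearMap.id ℂ H1 - X ∘L Y : H1 →L[ℂ] H1) : H1 →ₗ[ℂ] H1) := by
    intro y hy
    rw [mem1] at hy ⊢
    simp only [comp_apply]
    have hx0 : Y (X (Y y)) = Y y := congrArg Y hy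
    rw [(key (Y y) hx0).1]
    exact m1 (Y y) hx0
  have g6 : ∀ y ∈ LinearMap.ker ((ContinuousLinearMap.id ℂ H1 - X ∘L Y : H1 →L[ℂ] H1) : H1 →ₗ[ℂ] H1),
      (X ∘L V) y ∈ LinearMap.ker ((ContinuousLinearMap.id ℂ H1 - X ∘L Y : H1 →L[ℂ] H1) : H1 →ₗ[ℂ] H1) := by
    intro y hy
    rw [mem1] at hy ⊢
    simp only [comp_apply]
    have hx0 : Y (X (Y y)) = Y y := congrArg Y hy
    rw [← hy]
    exact m1 (Y y) hx0
  have g7 : ∀ y ∈ LinearMap.ker ((ContinuousLinearMap.id ℂ H1 - X ∘L Y : H1 →L[ℂ] H1) : H1 →ₗ[ℂ] H1),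
      (W ∘L V) y ∈ LinearMap.ker ((ContinuousLinearMap.id ℂ H1 - X ∘L Y : H1 →L[ℂ] H1) : H1 →ₗ[ℂ] H1) := by
    intro y hy
    rw [mem1] at hy ⊢
    simp only [comp_apply]
    have hx0 : Y (X (Y y)) = Y y := congrArg Y hy
    have hz : Y (X (V (X (Y y)))) = V (X (Y y)) := m0VX (Y y) hx0
    rw [← hy]
    rw [(key _ hz).1]
    exact m1 _ hz
  have g2' : ∀ u ∈ LinearMap.ker ((ContinuousLinearMap.id ℂ H0 - Y ∘L X : H0 →L[ℂ] H0) : H0 →ₗ[ℂ] H0),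
      ContinuousLinearMap.adjoint (V ∘L X) u ∈
        LinearMap.ker ((ContinuousLinearMap.id ℂ H0 - Y ∘L X : H0 →L[ℂ] H0) : H0 →ₗ[ℂ] H0) := by
    intro u hu
    rw [mem0] at hu ⊢
    simp only [adjoint_comp, comp_apply, ← hY, ← hW]
    rw [(key u hu).2]
    exact m0VX u hu
  have g4' : ∀ u ∈ LinearMap.ker ((ContinuousLinearMap.id ℂ H0 - Y ∘L X : H0 →L[ℂ] H0) : H0 →ₗ[ℂ] H0),
      ContinuousLinearMap.adjoint (V ∘L W) u ∈
        LinearMap.ker ((ContinuousLinearMap.id ℂ H0 - Y ∘L X : H0 →L[ℂ] H0) : H0 →ₗ[ℂ] H0) := by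
    intro u hu
    have : ContinuousLinearMap.adjoint (V ∘L W) = V ∘L W := by
      rw [adjoint_comp, hW, adjoint_adjoint, ← hW]
    rw [this]
    exact g3 u hu
  have g6' : ∀ u ∈ LinearMap.ker ((ContinuousLinearMap.id ℂ H1 - X ∘L Y : H1 →L[ℂ] H1) : H1 →ₗ[ℂ] H1),
      ContinuousLinearMap.adjoint (W ∘L Y) u ∈
        LinearMap.ker ((ContinuousLinearMap.id ℂ H1 - X ∘L Y : H1 →L[ℂ] H1) : H1 →ₗ[ℂ] H1) := by
    intro u hu
    have : ContinuousLinearMap.adjoint (W ∘L Y) = X ∘L V := by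
      rw [adjoint_comp, hW, hY, adjoint_adjoint, adjoint_adjoint]
    rw [this]
    exact g6 u hu
  have g8' : ∀ u ∈ LinearMap.ker ((ContinuousLinearMap.id ℂ H1 - X ∘L Y : H1 →L[ℂ] H1) : H1 →ₗ[ℂ] H1),
      ContinuousLinearMap.adjoint (W ∘L V) u ∈
        LinearMap.ker ((ContinuousLinearMap.id ℂ H1 - X ∘L Y : H1 →L[ℂ] H1) : H1 →ₗ[ℂ] H1) := by
    intro u hu
    have : ContinuousLinearMap.adjoint (W ∘L V) = W ∘L V := by
      rw [adjoint_comp, hW, adjoint_adjoint, ← hW]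
    rw [this]
    exact g7 u hu
  exact ⟨g1, riccati_aux_perp_invariant _ _ g2',
    g3, riccati_aux_perp_invariant _ _ g4',
    g5, riccati_aux_perp_invariant _ _ g6',
    g7, riccati_aux_perp_invariant _ _ g8'⟩
end
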